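/- arXiv:2407.03888 — 7 statements merged into one kernel-verified Lean document; each statement's English description precedes it below -/
import Mathlib

section
/- Let κ, c > 0, λ ≥ 0, ℓ > 0, T > 0 and set w = √(λ² + 4c/κ). Define α^{(ℓ)}(t) = -[(ℓκ(w-λ) + 4cκ) e^{w(T-t)} + ℓκ(w+λ) - 4cκ] / [(κ(w+λ)+ℓ) e^{w(T-t)} + κ(w-λ) - ℓ] for t ∈ [0,T]. Then α^{(ℓ)} solves the Riccati ODE (α^{(ℓ)})'(t) = -(α^{(ℓ)}(t))²/(2κ) + λ α^{(ℓ)}(t) + 2c on [0,T) with terminal condition α^{(ℓ)}(T) = -ℓ. -/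
/-!
Writing `r₁ = κ(λ + w)` and `r₂ = κ(λ - w)` for the two roots of `x ↦ -x²/(2κ) + λx + 2c`
(using `κw² = κλ² + 4c`), the numerator simplifies and `α` becomes the weighted average
`α = (r₁ b + r₂ a e^{w(T-t)}) / (a e^{w(T-t)} + b)` with `a = κ(w + λ) + ℓ`, `b = κ(w - λ) - ℓ`.
Every such average of the two roots with an exponential weight of rate `(r₁ - r₂)/(2κ)` solves the
Riccati equation `x' = -(x - r₁)(x - r₂)/(2κ)`. Since `a ≥ 0` and `a + b = 2κw > 0`, the
denominator is positive wherever `e^{w(T-t)} ≥ 1`, and at `t = T` the average equals `-ℓ`.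
-/

open Real Set

theorem hasDerivAt_exp_weighted_average {r₁ r₂ k μ a b T t : ℝ} (f : ℝ → ℝ)
    (hf : ∀ s, f s = (r₁ * b + r₂ * (a * exp (μ * (T - s)))) / (a * exp (μ * (T - s)) + b))
    (hk : k ≠ 0) (hμ : r₁ - r₂ = k * μ) (hD : a * exp (μ * (T - t)) + b ≠ 0) :
    HasDerivAt f (-(f t - r₁) * (f t - r₂) / k) t := by
  have hu : HasDerivAt (fun s => a * exp (μ * (T - s))) (-μ * (a * exp (μ * (T - t)))) t :=
    ((((hasDerivAt_id' t).const_sub T).const_mul μ).exp.const_mul a).congr_deriv (by ring)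
  have hquot := ((hu.const_mul r₂).const_add (r₁ * b)).div (hu.add_const b) hD
  refine (hquot.congr_deriv ?_).congr_of_eventuallyEq (Filter.Eventually.of_forall hf)
  rw [hf t]
  field_simp
  linear_combination (-(a * exp (μ * (T - t)) * b) * (r₁ - r₂)) * hμ

theorem neg_sq_div_add_mul_add_eq_neg_mul_div {κ lam c w : ℝ} (hκ : κ ≠ 0)
    (hw : κ * w ^ 2 = κ * lam ^ 2 + 4 * c) (x : ℝ) :
    -x ^ 2 / (2 * κ) + lam * x + 2 * c = -(x - κ * (lam + w)) * (x - κ * (lam - w)) / (2 * κ) := by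
  field_simp
  linear_combination (-κ) * hw

theorem mul_exp_add_pos {a b μ T t : ℝ} (ha : 0 ≤ a) (hab : 0 < a + b) (hμ : 0 ≤ μ) (ht : t ≤ T) :
    0 < a * exp (μ * (T - t)) + b := by
  have : 1 ≤ exp (μ * (T - t)) := one_le_exp (mul_nonneg hμ (sub_nonneg.2 ht))
  nlinarith

theorem riccati_solution_ell_general (κ c lam ℓ T : ℝ)
    (hκ : 0 < κ) (hc : 0 < c) (hℓ : 0 < ℓ)
    (w : ℝ) (hw : w = Real.sqrt (lam ^ 2 + 4 * c / κ))
    (α : ℝ → ℝ)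
    (hα : ∀ t, α t =
      -(((ℓ * κ * (w - lam) + 4 * c * κ) * Real.exp (w * (T - t))
          + ℓ * κ * (w + lam) - 4 * c * κ) /
        ((κ * (w + lam) + ℓ) * Real.exp (w * (T - t)) + κ * (w - lam) - ℓ))) :
    (∀ t ∈ Icc (0 : ℝ) T,
      (κ * (w + lam) + ℓ) * Real.exp (w * (T - t)) + κ * (w - lam) - ℓ ≠ 0) ∧
    α T = -ℓ ∧
    (∀ t ∈ Ico (0 : ℝ) T,
      HasDerivAt α (-(α t) ^ 2 / (2 * κ) + lam * α t + 2 * c) t) := by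
  have hw_sq : κ * w ^ 2 = κ * lam ^ 2 + 4 * c := by
    rw [hw, sq_sqrt (by positivity)]; field_simp
  have hw_abs : |lam| < w := by
    refine abs_lt_of_sq_lt_sq ?_ (hw ▸ sqrt_nonneg _)
    nlinarith
  obtain ⟨hw_add, hw_sub⟩ : 0 < w + lam ∧ 0 < w - lam := by
    constructor <;> linarith [neg_abs_le lam, le_abs_self lam]
  have hw_pos : 0 < w := by linarith
  have hD : ∀ t ≤ T, 0 < (κ * (w + lam) + ℓ) * exp (w * (T - t)) + (κ * (w - lam) - ℓ) :=
    fun t ht => mul_exp_add_pos (by positivity) (by linarith [mul_pos hκ hw_pos]) hw_pos.le ht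
  have hα_avg : ∀ s, α s = (κ * (lam + w) * (κ * (w - lam) - ℓ) + κ * (lam - w) *
      ((κ * (w + lam) + ℓ) * exp (w * (T - s)))) /
      ((κ * (w + lam) + ℓ) * exp (w * (T - s)) + (κ * (w - lam) - ℓ)) := by
    intro s
    rw [hα s, ← neg_div]
    congr 1
    · linear_combination (κ * exp (w * (T - s)) - κ) * hw_sq
    · ring
  refine ⟨fun t ht => by rw [add_sub_assoc]; exact (hD t ht.2).ne', ?_, fun t ht => ?_⟩
  · rw [hα_avg, div_eq_iff (hD T le_rfl).ne', sub_self, mul_zero, exp_zero]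
    ring
  · rw [neg_sq_div_add_mul_add_eq_neg_mul_div hκ.ne' hw_sq]
    exact hasDerivAt_exp_weighted_average α hα_avg (by positivity) (by ring) (hD t ht.2.le).ne'

theorem riccati_solution_ell (κ c lam ℓ T : ℝ)
    (hκ : 0 < κ) (hc : 0 < c) (hlam : 0 ≤ lam) (hℓ : 0 < ℓ) (hT : 0 < T)
    (w : ℝ) (hw : w = Real.sqrt (lam ^ 2 + 4 * c / κ))
    (α : ℝ → ℝ)
    (hα : ∀ t, α t =
      -(((ℓ * κ * (w - lam) + 4 * c * κ) * Real.exp (w * (T - t))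
          + ℓ * κ * (w + lam) - 4 * c * κ) /
        ((κ * (w + lam) + ℓ) * Real.exp (w * (T - t)) + κ * (w - lam) - ℓ))) :
    (∀ t ∈ Icc (0 : ℝ) T,
      (κ * (w + lam) + ℓ) * Real.exp (w * (T - t)) + κ * (w - lam) - ℓ ≠ 0) ∧
    α T = -ℓ ∧
    (∀ t ∈ Ico (0 : ℝ) T,
      HasDerivAt α (-(α t) ^ 2 / (2 * κ) + lam * α t + 2 * c) t) :=
  riccati_solution_ell_general κ c lam ℓ T hκ hc hℓ w hw α hα
end

section
/- With κ, c > 0, λ ≥ 0, T > 0, w = √(λ² + 4c/κ), and α^{(ℓ)}(t) = -[(ℓκ(w-λ)+4cκ)e^{w(T-t)} + ℓκ(w+λ) - 4cκ]/[(κ(w+λ)+ℓ)e^{w(T-t)} + κ(w-λ) - ℓ], for each fixed t ∈ [0,T) the limit as ℓ → ∞ of α^{(ℓ)}(t) equals α*(t) = -κ(w - λ) - 2κw/(e^{w(T-t)} - 1), and α*(t) < 0. -/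
open Real Set Filter Topology

/-!
Dividing numerator and denominator of `α ℓ t` by `ℓ` shows that, as `ℓ → ∞`, it tends to minus
the ratio of the `ℓ`-coefficients, `κ ((w - λ) E + (w + λ)) / (E - 1)` with `E = e^{w(T-t)} > 1`,
which rearranges to `α*(t)`. Negativity holds because `w = √(λ² + 4c/κ) > λ`.
-/

theorem lt_sqrt_sq_add {x a : ℝ} (ha : 0 < a) : x < √(x ^ 2 + a) :=
  (le_abs_self x).trans_lt <| by
    rw [← sqrt_sq_eq_abs]
    exact sqrt_lt_sqrt (sq_nonneg x) (lt_add_of_pos_right _ ha)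

theorem tendsto_affine_div_affine_atTop (a b c d : ℝ) (hc : c ≠ 0) :
    Tendsto (fun x => (a * x + b) / (c * x + d)) atTop (𝓝 (a / c)) := by
  have hlim : Tendsto (fun x : ℝ => (a + b / x) / (c + d / x)) atTop (𝓝 ((a + 0) / (c + 0))) :=
    (tendsto_const_nhds.add (tendsto_const_nhds.div_atTop tendsto_id)).div
      (tendsto_const_nhds.add (tendsto_const_nhds.div_atTop tendsto_id)) (by simpa using hc)
  rw [add_zero, add_zero] at hlim
  refine hlim.congr' ?_
  filter_upwards [eventually_ne_atTop 0] with x hx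
  rw [← mul_div_mul_right _ _ hx]
  congr 1 <;> field_simp

theorem alpha_ell_tendsto_general (κ c lam T : ℝ)
    (hκ : 0 < κ) (hc : 0 < c)
    (w : ℝ) (hw : w = Real.sqrt (lam ^ 2 + 4 * c / κ))
    (α : ℝ → ℝ → ℝ)
    (hα : ∀ ℓ t, α ℓ t =
      -(((ℓ * κ * (w - lam) + 4 * c * κ) * Real.exp (w * (T - t))
          + ℓ * κ * (w + lam) - 4 * c * κ) /
        ((κ * (w + lam) + ℓ) * Real.exp (w * (T - t)) + κ * (w - lam) - ℓ)))
    (t : ℝ) (ht : t ∈ Ico (0 : ℝ) T)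
    (αstar : ℝ) (hαstar : αstar = -κ * (w - lam) - 2 * κ * w / (Real.exp (w * (T - t)) - 1)) :
    Tendsto (fun ℓ => α ℓ t) atTop (nhds αstar) ∧ αstar < 0 := by
  have hq : 0 < 4 * c / κ := by positivity
  have hw_pos : 0 < w := hw ▸ sqrt_pos.mpr (by positivity)
  have hlam_lt : lam < w := hw ▸ lt_sqrt_sq_add hq
  have hE : 1 < exp (w * (T - t)) := one_lt_exp_iff.mpr (mul_pos hw_pos (sub_pos.mpr ht.2))
  set E := exp (w * (T - t))
  have hE1 : E - 1 ≠ 0 := (sub_pos.mpr hE).ne'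
  refine ⟨?_, ?_⟩
  · have hα_affine : (fun ℓ => α ℓ t) = fun ℓ =>
        -(((κ * (w - lam) * E + κ * (w + lam)) * ℓ + 4 * c * κ * (E - 1)) /
          ((E - 1) * ℓ + κ * ((w + lam) * E + (w - lam)))) := by
      funext ℓ
      rw [hα]
      ring
    have hαstar' : αstar = -((κ * (w - lam) * E + κ * (w + lam)) / (E - 1)) := by
      rw [hαstar]
      field_simp
      ring
    rw [hα_affine, hαstar']
    exact (tendsto_affine_div_affine_atTop _ _ _ _ hE1).neg
  · have h1 : 0 < 2 * κ * w / (E - 1) := div_pos (by positivity) (by linarith)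
    have h2 : 0 < κ * (w - lam) := mul_pos hκ (by linarith)
    rw [hαstar]
    linarith [neg_mul κ (w - lam)]

theorem alpha_ell_tendsto (κ c lam T : ℝ)
    (hκ : 0 < κ) (hc : 0 < c) (hlam : 0 ≤ lam) (hT : 0 < T)
    (w : ℝ) (hw : w = Real.sqrt (lam ^ 2 + 4 * c / κ))
    (α : ℝ → ℝ → ℝ)
    (hα : ∀ ℓ t, α ℓ t =
      -(((ℓ * κ * (w - lam) + 4 * c * κ) * Real.exp (w * (T - t))
          + ℓ * κ * (w + lam) - 4 * c * κ) /
        ((κ * (w + lam) + ℓ) * Real.exp (w * (T - t)) + κ * (w - lam) - ℓ)))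
    (t : ℝ) (ht : t ∈ Ico (0 : ℝ) T)
    (αstar : ℝ) (hαstar : αstar = -κ * (w - lam) - 2 * κ * w / (Real.exp (w * (T - t)) - 1)) :
    Tendsto (fun ℓ => α ℓ t) atTop (nhds αstar) ∧ αstar < 0 :=
  alpha_ell_tendsto_general κ c lam T hκ hc w hw α hα t ht αstar hαstar
end

section
/- Let κ, c > 0, λ ≥ 0, T > 0, w = √(λ² + 4c/κ), and α*(t) = -κ(w-λ) - 2κw/(e^{w(T-t)} - 1) for t ∈ [0,T). Then α* satisfies the Riccati equation (α*)'(t) = -(α*(t))²/(2κ) + λ α*(t) + 2c on [0,T), and α*(t) → -∞ as t → T⁻. -/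
/-!
With `E(t) = exp (w (T - t))`, the function `α*` is an affine function of `1 / (E - 1)`, and
`E' = -w E` turns the derivative into a rational function of `E`; the Riccati identity is then
polynomial algebra once `c` is eliminated through `w² = λ² + 4c/κ`. As `t → T⁻`, `E - 1 → 0⁺`,
so the term `-2κw / (E - 1)` drives `α*` to `-∞`.
-/

open Real Set Filter Topology

lemma one_lt_exp_mul_sub {w T t : ℝ} (hw : 0 < w) (ht : t < T) : 1 < exp (w * (T - t)) :=
  one_lt_exp_iff.mpr (mul_pos hw (sub_pos.mpr ht))

lemma hasDerivAt_div_exp_mul_sub_sub_one (a w T t : ℝ) (h : exp (w * (T - t)) ≠ 1) :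
    HasDerivAt (fun s => a / (exp (w * (T - s)) - 1))
      (a * w * exp (w * (T - t)) / (exp (w * (T - t)) - 1) ^ 2) t := by
  have hE : HasDerivAt (fun s => exp (w * (T - s)) - 1) (exp (w * (T - t)) * (w * -1)) t :=
    (((hasDerivAt_id t).const_sub T).const_mul w).exp.sub_const 1
  exact ((hasDerivAt_const t a).div hE (sub_ne_zero.mpr h)).congr_deriv (by ring)

lemma tendsto_div_exp_mul_sub_sub_one_atTop {a w T : ℝ} (ha : 0 < a) (hw : 0 < w) :
    Tendsto (fun t => a / (exp (w * (T - t)) - 1)) (𝓝[<] T) atTop := by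
  have hcont : Continuous fun t => exp (w * (T - t)) - 1 := by fun_prop
  have hto : Tendsto (fun t => exp (w * (T - t)) - 1) (𝓝[<] T) (𝓝[>] 0) := by
    refine tendsto_nhdsWithin_of_tendsto_nhds_of_eventually_within _ ?_ ?_
    · simpa using (hcont.tendsto T).mono_left nhdsWithin_le_nhds
    · filter_upwards [self_mem_nhdsWithin] with t ht
      exact sub_pos.mpr (one_lt_exp_mul_sub hw ht)
  exact hto.inv_tendsto_nhdsGT_zero.const_mul_atTop ha

noncomputable def riccatiBlowupSolution (κ lam w T t : ℝ) : ℝ :=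
  -κ * (w - lam) - 2 * κ * w / (exp (w * (T - t)) - 1)

lemma hasDerivAt_riccatiBlowupSolution {κ lam w T t : ℝ} (hκ : κ ≠ 0)
    (h : exp (w * (T - t)) ≠ 1) :
    HasDerivAt (riccatiBlowupSolution κ lam w T)
      (-(riccatiBlowupSolution κ lam w T t) ^ 2 / (2 * κ)
        + lam * riccatiBlowupSolution κ lam w T t + κ * (w ^ 2 - lam ^ 2) / 2) t := by
  refine ((hasDerivAt_div_exp_mul_sub_sub_one (2 * κ * w) w T t h).const_sub
    (-κ * (w - lam))).congr_deriv ?_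
  have hE : exp (w * (T - t)) - 1 ≠ 0 := sub_ne_zero.mpr h
  simp only [riccatiBlowupSolution]
  field_simp
  ring

lemma tendsto_riccatiBlowupSolution_atBot {κ lam w T : ℝ} (hκ : 0 < κ) (hw : 0 < w) :
    Tendsto (riccatiBlowupSolution κ lam w T) (𝓝[<] T) atBot := by
  have hdiv := tendsto_div_exp_mul_sub_sub_one_atTop (T := T) (by positivity : 0 < 2 * κ * w) hw
  exact tendsto_atBot_add_const_left _ (-κ * (w - lam)) (tendsto_neg_atTop_atBot.comp hdiv)

theorem alpha_star_riccati_and_blowup_general (κ c lam T : ℝ)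
    (hκ : 0 < κ) (hc : 0 < c)
    (w : ℝ) (hw : w = Real.sqrt (lam ^ 2 + 4 * c / κ))
    (αstar : ℝ → ℝ)
    (hα : ∀ t, αstar t = -κ * (w - lam) - 2 * κ * w / (Real.exp (w * (T - t)) - 1)) :
    (∀ t ∈ Ico (0 : ℝ) T,
      HasDerivAt αstar (-(αstar t) ^ 2 / (2 * κ) + lam * αstar t + 2 * c) t) ∧
    Tendsto αstar (nhdsWithin T (Iio T)) atBot := by
  have hdisc : 0 < lam ^ 2 + 4 * c / κ := by positivity
  have hwpos : 0 < w := hw ▸ sqrt_pos.mpr hdisc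
  have hc_eq : κ * (w ^ 2 - lam ^ 2) / 2 = 2 * c := by
    rw [hw, sq_sqrt hdisc.le]
    field_simp
    ring
  obtain rfl : αstar = riccatiBlowupSolution κ lam w T := funext hα
  refine ⟨fun t ht => ?_, tendsto_riccatiBlowupSolution_atBot hκ hwpos⟩
  rw [← hc_eq]
  exact hasDerivAt_riccatiBlowupSolution hκ.ne' (one_lt_exp_mul_sub hwpos ht.2).ne'

theorem alpha_star_riccati_and_blowup (κ c lam T : ℝ)
    (hκ : 0 < κ) (hc : 0 < c) (hlam : 0 ≤ lam) (hT : 0 < T)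
    (w : ℝ) (hw : w = Real.sqrt (lam ^ 2 + 4 * c / κ))
    (αstar : ℝ → ℝ)
    (hα : ∀ t, αstar t = -κ * (w - lam) - 2 * κ * w / (Real.exp (w * (T - t)) - 1)) :
    (∀ t ∈ Ico (0 : ℝ) T,
      HasDerivAt αstar (-(αstar t) ^ 2 / (2 * κ) + lam * αstar t + 2 * c) t) ∧
    Tendsto αstar (nhdsWithin T (Iio T)) atBot :=
  alpha_star_riccati_and_blowup_general κ c lam T hκ hc w hw αstar hα
end

section
/- Let p > 1, γ > 0, κ > 0, λ > 0 and α < 0. Define ψ̃ = ((1/π)√(-λκα/2))^{(p-1)/p} · (p/(p-1)) · γ^{1/p}. Then ψ̃ > 0 and the function π(u₁,u₂) = ((p-1)/(γp))^{1/(p-1)} ( ψ̃ - κ(u₁ - m₁)² + (αλ/2)(u₂ - m₂)² )_+^{1/(p-1)} integrates to 1 over ℝ², for any real centers m₁, m₂. -/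
/-!
Translating and rescaling the axes turns the ellipse into a disc, at the cost of the Jacobian
factor `1 / √(a b)`, and polar coordinates followed by `t = r²` reduce the integral of a radial
profile `f (x² + y²)` over the plane to `π ∫₀^∞ f`. For `f t = (ψ - t)₊ ^ s` this gives
`π ψ ^ (s + 1) / ((s + 1) √(a b))`; with `s = 1 / (p - 1)` the value of `ψ̃` is exactly the one
making the prefactor cancel.
-/

open Real MeasureTheory Set

theorem integral_comp_sq_add_sq (f : ℝ → ℝ) :
    ∫ u : ℝ × ℝ, f (u.1 ^ 2 + u.2 ^ 2) = π * ∫ t in Ioi 0, f t := by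
  have hpolar : ∫ u : ℝ × ℝ, f (u.1 ^ 2 + u.2 ^ 2)
      = ∫ q in Ioi (0 : ℝ) ×ˢ Ioo (-π) π, (q.1 * f (q.1 ^ 2)) * (fun _ ↦ (1 : ℝ)) q.2 := by
    rw [← integral_comp_polarCoord_symm]
    refine setIntegral_congr_fun polarCoord.open_target.measurableSet fun q _ ↦ ?_
    simp only [polarCoord_symm_apply, smul_eq_mul, mul_one, mul_pow, ← mul_add,
      cos_sq_add_sin_sq]
  have hsubst : ∫ r in Ioi (0 : ℝ), r * f (r ^ 2) = (∫ t in Ioi 0, f t) / 2 := by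
    rw [← integral_comp_rpow_Ioi f two_ne_zero, ← integral_div]
    refine setIntegral_congr_fun measurableSet_Ioi fun r _ ↦ ?_
    norm_num [smul_eq_mul]
    ring
  rw [hpolar, Measure.volume_eq_prod,
    setIntegral_prod_mul (fun r ↦ r * f (r ^ 2)) (fun _ ↦ (1 : ℝ)), hsubst]
  simp [pi_pos.le]
  ring

theorem integral_comp_mul_prod_mul {E : Type*} [NormedAddCommGroup E] [NormedSpace ℝ E]
    (F : ℝ × ℝ → E) {c d : ℝ} (hc : c ≠ 0) (hd : d ≠ 0) :
    ∫ u : ℝ × ℝ, F (c * u.1, d * u.2) = |c * d|⁻¹ • ∫ u, F u := by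
  have hT : MeasurableEmbedding (Prod.map (c * ·) (d * ·)) :=
    ((Homeomorph.mulLeft₀ c hc).prodCongr (Homeomorph.mulLeft₀ d hd)).measurableEmbedding
  have hmap : Measure.map (Prod.map (c * ·) (d * ·)) (volume : Measure (ℝ × ℝ))
      = ENNReal.ofReal |c * d|⁻¹ • volume := by
    rw [Measure.volume_eq_prod, ← Measure.map_prod_map _ _ (measurable_const_mul c)
      (measurable_const_mul d), Real.map_volume_mul_left hc, Real.map_volume_mul_left hd,
      Measure.prod_smul_left, Measure.prod_smul_right, smul_smul, ← ENNReal.ofReal_mul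
      (abs_nonneg _), abs_inv, abs_inv, abs_mul, mul_inv]
  calc ∫ u : ℝ × ℝ, F (c * u.1, d * u.2)
      = ∫ u, F u ∂(Measure.map (Prod.map (c * ·) (d * ·)) volume) :=
        (hT.integral_map F).symm
    _ = |c * d|⁻¹ • ∫ u, F u := by
        rw [hmap, integral_smul_measure, ENNReal.toReal_ofReal (by positivity)]

theorem integral_Ioi_max_sub_zero_rpow {ψ s : ℝ} (hψ : 0 ≤ ψ) (hs : -1 < s) (hs0 : s ≠ 0) :
    ∫ t in Ioi 0, max (ψ - t) 0 ^ s = ψ ^ (s + 1) / (s + 1) := by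
  have hindicator : (fun t ↦ max (ψ - t) 0 ^ s) = (Iic ψ).indicator fun t ↦ (ψ - t) ^ s := by
    ext t
    by_cases ht : t ∈ Iic ψ
    · rw [indicator_of_mem ht, max_eq_left (by linarith [mem_Iic.1 ht])]
    · rw [indicator_of_notMem ht, max_eq_right (by linarith [not_le.1 (mt mem_Iic.2 ht)]),
        zero_rpow hs0]
  rw [hindicator, setIntegral_indicator measurableSet_Iic, Ioi_inter_Iic,
    ← intervalIntegral.integral_of_le hψ,
    intervalIntegral.integral_comp_sub_left (fun t ↦ t ^ s), sub_self, sub_zero,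
    integral_rpow (Or.inl hs), zero_rpow (by linarith), sub_zero]

theorem integral_comp_ellipse (f : ℝ → ℝ) {a b : ℝ} (ha : 0 < a) (hb : 0 < b) (m₁ m₂ : ℝ) :
    ∫ u : ℝ × ℝ, f (a * (u.1 - m₁) ^ 2 + b * (u.2 - m₂) ^ 2)
      = π / √(a * b) * ∫ t in Ioi 0, f t := by
  have htranslate : ∫ u : ℝ × ℝ, f (a * (u.1 - m₁) ^ 2 + b * (u.2 - m₂) ^ 2)
      = ∫ u : ℝ × ℝ, f (a * u.1 ^ 2 + b * u.2 ^ 2) :=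
    integral_sub_right_eq_self (fun u : ℝ × ℝ ↦ f (a * u.1 ^ 2 + b * u.2 ^ 2)) (m₁, m₂)
  have hscale := integral_comp_mul_prod_mul (fun v : ℝ × ℝ ↦ f (v.1 ^ 2 + v.2 ^ 2))
    (sqrt_pos.2 ha).ne' (sqrt_pos.2 hb).ne'
  simp only [mul_pow, sq_sqrt ha.le, sq_sqrt hb.le] at hscale
  rw [htranslate, hscale, integral_comp_sq_add_sq, smul_eq_mul, ← sqrt_mul ha.le,
    abs_of_nonneg (sqrt_nonneg _)]
  ring

theorem qGaussian_height_rpow {A B γ p : ℝ} (hA : 0 ≤ A) (hB : 0 ≤ B) (hγ : 0 ≤ γ)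
    (hp : 1 < p) :
    (A ^ ((p - 1) / p) * B * γ ^ (1 / p)) ^ (p / (p - 1))
      = A * B ^ (p / (p - 1)) * γ ^ (1 / (p - 1)) := by
  have hp0 : p ≠ 0 := by positivity
  have hp1 : p - 1 ≠ 0 := by linarith
  rw [mul_rpow (by positivity) (by positivity), mul_rpow (by positivity) hB, ← rpow_mul hA,
    ← rpow_mul hγ, div_mul_div_cancel₀ hp0, div_self hp1, rpow_one,
    show 1 / p * (p / (p - 1)) = 1 / (p - 1) by field_simp]

theorem qGaussian_ellipse_normalization (p γ κ lam α m₁ m₂ : ℝ)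
    (hp : 1 < p) (hγ : 0 < γ) (hκ : 0 < κ) (hlam : 0 < lam) (hα : α < 0)
    (ψ : ℝ)
    (hψ : ψ = ((1 / Real.pi) * Real.sqrt (-lam * κ * α / 2)) ^ ((p - 1) / p)
      * (p / (p - 1)) * γ ^ (1 / p))
    (ρ : ℝ × ℝ → ℝ)
    (hρ : ∀ u : ℝ × ℝ, ρ u = ((p - 1) / (γ * p)) ^ (1 / (p - 1)) *
      (max (ψ - κ * (u.1 - m₁) ^ 2 + α * lam / 2 * (u.2 - m₂) ^ 2) 0) ^ (1 / (p - 1))) :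
    0 < ψ ∧ (∫ u : ℝ × ℝ, ρ u) = 1 := by
  have hp1 : 0 < p - 1 := by linarith
  have hb : 0 < -(α * lam / 2) := by nlinarith
  have hc : 0 < √(-lam * κ * α / 2) := sqrt_pos.2 (by nlinarith [mul_pos hκ hb])
  have hψpos : 0 < ψ := by rw [hψ]; positivity
  refine ⟨hψpos, ?_⟩
  have hρ_ellipse : ρ = fun u ↦ ((p - 1) / (γ * p)) ^ (1 / (p - 1)) *
      (fun t ↦ max (ψ - t) 0 ^ (1 / (p - 1)))
        (κ * (u.1 - m₁) ^ 2 + -(α * lam / 2) * (u.2 - m₂) ^ 2) := by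
    funext u
    rw [hρ]
    ring_nf
  have hexp : 1 / (p - 1) + 1 = p / (p - 1) := by field_simp; ring
  rw [hρ_ellipse, integral_const_mul,
    integral_comp_ellipse (fun t ↦ max (ψ - t) 0 ^ (1 / (p - 1))) hκ hb,
    integral_Ioi_max_sub_zero_rpow hψpos.le (by linarith [one_div_pos.2 hp1])
      (one_div_pos.2 hp1).ne',
    show κ * -(α * lam / 2) = -lam * κ * α / 2 by ring, hexp, hψ,
    qGaussian_height_rpow (by positivity) (by positivity) hγ.le hp,
    ← hexp, rpow_add (by positivity), rpow_one, hexp]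
  have hcancel : ((p - 1) / (γ * p)) ^ (1 / (p - 1)) * ((p / (p - 1)) ^ (1 / (p - 1))
      * γ ^ (1 / (p - 1))) = 1 := by
    rw [← mul_rpow (by positivity) hγ.le, ← mul_rpow (by positivity) (by positivity),
      show (p - 1) / (γ * p) * (p / (p - 1) * γ) = 1 by field_simp, one_rpow]
  refine Eq.trans ?_ hcancel
  generalize √(-lam * κ * α / 2) = c at hc ⊢
  field_simp
end

section
/- Let p > 1, γ > 0, κ > 0, λ > 0, α < 0, m₁, m₂ ∈ ℝ, and ψ̃ = ((1/π)√(-λκα/2))^{(p-1)/p}(p/(p-1))γ^{1/p}. For the density π(u₁,u₂) = ((p-1)/(γp))^{1/(p-1)}(ψ̃ - κ(u₁-m₁)² + (αλ/2)(u₂-m₂)²)_+^{1/(p-1)} on ℝ², the first moments are ∫ u₁ π du = m₁ and ∫ u₂ π du = m₂, and the second moments are ∫ u₁² π du = ψ̃(p-1)/(2κ(2p-1)) + m₁² and ∫ u₂² π du = -ψ̃(p-1)/(αλ(2p-1)) + m₂². -/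
/-!
With `q = 1/(p-1)`, `a₁ = √(ψ̃/κ)` and `a₂ = √(-2ψ̃/(αλ))`, the affine substitution
`u = (a₁ v₁ + m₁, a₂ v₂ + m₂)` turns the density into a constant multiple of the disc profile
`(1 - |v|²)₊^q`. In polar coordinates the profile has mass `π/(q+1)`, its first moments vanish
by symmetry, and `∫ v₁² = ∫ v₂² = π/(2(q+1)(q+2))`. Expanding `a v + m` and `(a v + m)²`
against it gives the moments of the density as multiples of its mass, and `ψ̃` is exactly the
value making that mass one.
-/

open Real MeasureTheory Set

theorem integral_mul_one_sub_sq_rpow {q : ℝ} (hq : 0 ≤ q) :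
    ∫ r in (0 : ℝ)..1, r * (1 - r ^ 2) ^ q = 1 / (2 * (q + 1)) := by
  have hq1 : 0 < q + 1 := by linarith
  have hderiv : ∀ r ∈ Ioo (0 : ℝ) 1,
      HasDerivAt (fun r : ℝ => -(1 - r ^ 2) ^ (q + 1) / (2 * (q + 1))) (r * (1 - r ^ 2) ^ q) r := by
    intro r hr
    have hpos : 1 - r ^ 2 ≠ 0 := by nlinarith [hr.1, hr.2]
    refine ((((hasDerivAt_pow 2 r).const_sub 1).rpow_const (p := q + 1) (Or.inl hpos)).neg.div_const
      (2 * (q + 1))).congr_deriv ?_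
    rw [add_sub_cancel_right]
    field_simp
    ring
  rw [intervalIntegral.integral_eq_sub_of_hasDerivAt_of_le zero_le_one
    (by fun_prop (disch := exact hq1.le)) hderiv
    (by apply Continuous.intervalIntegrable; fun_prop (disch := exact hq))]
  norm_num [zero_rpow hq1.ne']
  field_simp

theorem integral_cube_mul_one_sub_sq_rpow {q : ℝ} (hq : 0 ≤ q) :
    ∫ r in (0 : ℝ)..1, r ^ 3 * (1 - r ^ 2) ^ q = 1 / (2 * (q + 1) * (q + 2)) := by
  have hq1 : 0 ≤ q + 1 := by linarith
  have hsplit : EqOn (fun r : ℝ => r ^ 3 * (1 - r ^ 2) ^ q)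
      (fun r => r * (1 - r ^ 2) ^ q - r * (1 - r ^ 2) ^ (q + 1)) (uIcc 0 1) := by
    intro r hr
    rw [uIcc_of_le zero_le_one] at hr
    simp only [rpow_add_one' (by nlinarith [hr.1, hr.2] : (0 : ℝ) ≤ 1 - r ^ 2) (by positivity)]
    ring
  rw [intervalIntegral.integral_congr hsplit, intervalIntegral.integral_sub
    (by apply Continuous.intervalIntegrable; fun_prop (disch := exact hq))
    (by apply Continuous.intervalIntegrable; fun_prop (disch := exact hq1)),
    integral_mul_one_sub_sq_rpow hq, integral_mul_one_sub_sq_rpow hq1]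
  field_simp
  ring

theorem setIntegral_Ioi_mul_max_one_sub_sq_rpow {q : ℝ} (hq : q ≠ 0) (f : ℝ → ℝ) :
    ∫ r in Ioi (0 : ℝ), f r * max (1 - r ^ 2) 0 ^ q
      = ∫ r in (0 : ℝ)..1, f r * (1 - r ^ 2) ^ q := by
  rw [setIntegral_eq_of_subset_of_forall_sdiff_eq_zero measurableSet_Ioi Ioc_subset_Ioi_self,
    intervalIntegral.integral_of_le zero_le_one]
  · refine setIntegral_congr_fun measurableSet_Ioc fun r hr => ?_
    rw [max_eq_left (by nlinarith [hr.1, hr.2])]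
  · rintro r ⟨hr0, hr1⟩
    simp only [mem_Ioi, mem_Ioc, not_and, not_le] at hr0 hr1
    rw [max_eq_right (by nlinarith [hr1 hr0]), zero_rpow hq, mul_zero]

theorem integral_eq_mul_of_polar (f : ℝ × ℝ → ℝ) (rad ang : ℝ → ℝ)
    (h : ∀ r θ, r * f (r * cos θ, r * sin θ) = rad r * ang θ) :
    ∫ v, f v = (∫ r in Ioi 0, rad r) * ∫ θ in Ioo (-π) π, ang θ := by
  rw [← integral_comp_polarCoord_symm, polarCoord_target, Measure.volume_eq_prod,
    ← setIntegral_prod_mul]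
  exact setIntegral_congr_fun (measurableSet_Ioi.prod measurableSet_Ioo) fun p _ => h p.1 p.2

theorem setIntegral_Ioo_cos_sq : ∫ θ in Ioo (-π) π, cos θ ^ 2 = π := by
  rw [← integral_Ioc_eq_integral_Ioo, ← intervalIntegral.integral_of_le (by linarith [pi_pos]),
    integral_cos_sq]
  simp

theorem setIntegral_Ioo_one : ∫ _ in Ioo (-π) π, (1 : ℝ) = 2 * π := by
  simp [pi_pos.le]
  ring

noncomputable def discBump (q : ℝ) (v : ℝ × ℝ) : ℝ := max (1 - v.1 ^ 2 - v.2 ^ 2) 0 ^ q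

section discBump

variable {q : ℝ}

theorem discBump_polar (q r θ : ℝ) :
    discBump q (r * cos θ, r * sin θ) = max (1 - r ^ 2) 0 ^ q := by
  rw [discBump]
  congr 2
  linear_combination (-(r ^ 2)) * (sin_sq_add_cos_sq θ)

theorem discBump_neg (q : ℝ) (v : ℝ × ℝ) : discBump q (-v) = discBump q v := by
  simp [discBump]

theorem discBump_swap (q : ℝ) (v : ℝ × ℝ) : discBump q v.swap = discBump q v := by
  simp only [discBump, Prod.fst_swap, Prod.snd_swap, sub_right_comm]

theorem continuous_discBump (hq : 0 ≤ q) : Continuous (discBump q) := by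
  unfold discBump
  fun_prop (disch := exact hq)

theorem hasCompactSupport_discBump (hq : q ≠ 0) : HasCompactSupport (discBump q) := by
  refine HasCompactSupport.intro (isCompact_closedBall 0 1) fun v hv => ?_
  simp only [Metric.mem_closedBall, dist_zero_right, Prod.norm_def, Real.norm_eq_abs, sup_le_iff,
    not_and_or, not_le] at hv
  rw [discBump, max_eq_right, zero_rpow hq]
  rcases hv with h | h <;> nlinarith [sq_abs v.1, sq_abs v.2, abs_nonneg v.1, abs_nonneg v.2]

theorem integrable_discBump (hq : 0 < q) : Integrable (discBump q) :=
  (continuous_discBump hq.le).integrable_of_hasCompactSupport (hasCompactSupport_discBump hq.ne')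

theorem Continuous.integrable_mul_discBump (hq : 0 < q) {w : ℝ × ℝ → ℝ} (hw : Continuous w) :
    Integrable fun v => w v * discBump q v :=
  (hw.mul (continuous_discBump hq.le)).integrable_of_hasCompactSupport
    (hasCompactSupport_discBump hq.ne').mul_left

theorem integral_discBump (hq : 0 < q) : ∫ v, discBump q v = π / (q + 1) := by
  rw [integral_eq_mul_of_polar _ (fun r => r * max (1 - r ^ 2) 0 ^ q) (fun _ => 1)
      (fun r θ => by rw [discBump_polar, mul_one]),
    setIntegral_Ioi_mul_max_one_sub_sq_rpow hq.ne', integral_mul_one_sub_sq_rpow hq.le,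
    setIntegral_Ioo_one]
  field_simp

theorem integral_fst_mul_discBump : ∫ v, v.1 * discBump q v = 0 := by
  have h := integral_neg_eq_self (fun v : ℝ × ℝ => v.1 * discBump q v) volume
  simp only [Prod.fst_neg, discBump_neg, neg_mul, integral_neg] at h
  linarith

theorem integral_fst_sq_mul_discBump (hq : 0 < q) :
    ∫ v, v.1 ^ 2 * discBump q v = π / (2 * (q + 1) * (q + 2)) := by
  rw [integral_eq_mul_of_polar _ (fun r => r ^ 3 * max (1 - r ^ 2) 0 ^ q) (fun θ => cos θ ^ 2)
      (fun r θ => by rw [discBump_polar]; ring),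
    setIntegral_Ioi_mul_max_one_sub_sq_rpow hq.ne', integral_cube_mul_one_sub_sq_rpow hq.le,
    setIntegral_Ioo_cos_sq]
  ring

end discBump

theorem integral_comp_mul_prodMk_mul {E : Type*} [NormedAddCommGroup E] [NormedSpace ℝ E]
    (f : ℝ × ℝ → E) {a b : ℝ} (ha : a ≠ 0) (hb : b ≠ 0) :
    ∫ v : ℝ × ℝ, f (a * v.1, b * v.2) = |(a * b)⁻¹| • ∫ u : ℝ × ℝ, f u := by
  have he : MeasurableEmbedding (Prod.map (a * ·) (b * ·)) :=
    ((Homeomorph.mulLeft₀ a ha).prodCongr (Homeomorph.mulLeft₀ b hb)).measurableEmbedding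
  have hmap : Measure.map (Prod.map (a * ·) (b * ·)) volume
      = ENNReal.ofReal |(a * b)⁻¹| • (volume : Measure (ℝ × ℝ)) := by
    rw [Measure.volume_eq_prod, ← Measure.map_prod_map _ _ (measurable_const_mul a)
      (measurable_const_mul b), Real.map_volume_mul_left ha, Real.map_volume_mul_left hb,
      Measure.prod_smul_left, Measure.prod_smul_right, smul_smul,
      ← ENNReal.ofReal_mul (abs_nonneg _), ← abs_mul, mul_inv]
  calc ∫ v : ℝ × ℝ, f (a * v.1, b * v.2)
      = ∫ u, f u ∂(Measure.map (Prod.map (a * ·) (b * ·)) volume) := (he.integral_map f).symm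
    _ = |(a * b)⁻¹| • ∫ u : ℝ × ℝ, f u := by
      rw [hmap, integral_smul_measure, ENNReal.toReal_ofReal (abs_nonneg _)]

theorem integral_comp_affine_prodMk {E : Type*} [NormedAddCommGroup E] [NormedSpace ℝ E]
    (f : ℝ × ℝ → E) {a b : ℝ} (ha : a ≠ 0) (hb : b ≠ 0) (m₁ m₂ : ℝ) :
    ∫ v : ℝ × ℝ, f (a * v.1 + m₁, b * v.2 + m₂) = |(a * b)⁻¹| • ∫ u : ℝ × ℝ, f u := by
  rw [← integral_add_right_eq_self f (m₁, m₂), ← integral_comp_mul_prodMk_mul _ ha hb]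
  rfl

theorem integral_comp_swap (f : ℝ × ℝ → ℝ) : ∫ u : ℝ × ℝ, f u.swap = ∫ u, f u := by
  rw [Measure.volume_eq_prod]
  exact integral_prod_swap f

section affine

variable {Ω : Type*} [MeasurableSpace Ω] {μ : Measure Ω} {X g : Ω → ℝ}

theorem integral_affine_mul (hg : Integrable g μ) (hXg : Integrable (fun x => X x * g x) μ)
    (a m : ℝ) :
    ∫ x, (a * X x + m) * g x ∂μ = a * ∫ x, X x * g x ∂μ + m * ∫ x, g x ∂μ := by
  simp only [add_mul, mul_assoc]
  rw [integral_add (hXg.const_mul a) (hg.const_mul m), integral_const_mul, integral_const_mul]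

theorem integral_affine_sq_mul (hg : Integrable g μ) (hXg : Integrable (fun x => X x * g x) μ)
    (hX2g : Integrable (fun x => X x ^ 2 * g x) μ) (a m : ℝ) :
    ∫ x, (a * X x + m) ^ 2 * g x ∂μ
      = a ^ 2 * ∫ x, X x ^ 2 * g x ∂μ + 2 * a * m * ∫ x, X x * g x ∂μ + m ^ 2 * ∫ x, g x ∂μ := by
  have h : ∀ x, (a * X x + m) ^ 2 * g x
      = a ^ 2 * (X x ^ 2 * g x) + 2 * a * m * (X x * g x) + m ^ 2 * g x := fun x => by ring
  simp only [h]
  rw [integral_add (by exact (hX2g.const_mul _).add (hXg.const_mul _)) (hg.const_mul _),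
    integral_add (hX2g.const_mul _) (hXg.const_mul _), integral_const_mul, integral_const_mul,
    integral_const_mul]

end affine

theorem qGaussian_const_pos {p γ A : ℝ} (hp : 1 < p) (hγ : 0 < γ) (hA : 0 < A) :
    0 < A ^ ((p - 1) / p) * (p / (p - 1)) * γ ^ (1 / p) := by
  have : 0 < p / (p - 1) := div_pos (by linarith) (by linarith)
  positivity

theorem qGaussian_normalization {p γ A ψ : ℝ} (hp : 1 < p) (hγ : 0 < γ) (hA : 0 < A)
    (hψ : ψ = A ^ ((p - 1) / p) * (p / (p - 1)) * γ ^ (1 / p)) :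
    ((p - 1) / (γ * p)) ^ (1 / (p - 1)) * ψ ^ (1 / (p - 1)) * ψ = A * (p / (p - 1)) := by
  have hp1 : p - 1 ≠ 0 := by linarith
  have ht : 0 < p / (p - 1) := div_pos (by linarith) (by linarith)
  have hψt : ψ ^ (1 / (p - 1)) * ψ = A * (p / (p - 1)) ^ (p / (p - 1)) * γ ^ (1 / (p - 1)) := by
    rw [← rpow_add_one (hψ ▸ qGaussian_const_pos hp hγ hA).ne',
      show 1 / (p - 1) + 1 = p / (p - 1) by field_simp; ring, hψ,
      mul_rpow (by positivity) (by positivity), mul_rpow (by positivity) ht.le,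
      ← rpow_mul hA.le, ← rpow_mul hγ.le, show (p - 1) / p * (p / (p - 1)) = 1 by field_simp,
      rpow_one, show 1 / p * (p / (p - 1)) = 1 / (p - 1) by field_simp]
  have hC : ((p - 1) / (γ * p)) ^ (1 / (p - 1)) * γ ^ (1 / (p - 1)) * (p / (p - 1)) ^ (p / (p - 1))
      = p / (p - 1) := by
    rw [← mul_rpow (by positivity) hγ.le,
      show (p - 1) / (γ * p) * γ = (p / (p - 1))⁻¹ by field_simp, inv_rpow ht.le, inv_mul_eq_div,
      ← rpow_sub ht, show p / (p - 1) - 1 / (p - 1) = 1 by field_simp, rpow_one]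
  calc ((p - 1) / (γ * p)) ^ (1 / (p - 1)) * ψ ^ (1 / (p - 1)) * ψ
      = A * (((p - 1) / (γ * p)) ^ (1 / (p - 1)) * γ ^ (1 / (p - 1))
          * (p / (p - 1)) ^ (p / (p - 1))) := by
        rw [mul_assoc, hψt]; ring
    _ = A * (p / (p - 1)) := by rw [hC]

def IsEllipseBump (q a₁ a₂ m₁ m₂ K : ℝ) (ρ : ℝ × ℝ → ℝ) : Prop :=
  ∀ v : ℝ × ℝ, ρ (a₁ * v.1 + m₁, a₂ * v.2 + m₂) = K * discBump q v

namespace IsEllipseBump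

variable {q a₁ a₂ m₁ m₂ K : ℝ} {ρ : ℝ × ℝ → ℝ}

theorem swap (hρ : IsEllipseBump q a₁ a₂ m₁ m₂ K ρ) :
    IsEllipseBump q a₂ a₁ m₂ m₁ K (ρ ∘ Prod.swap) := fun v => by
  simpa only [Function.comp_apply, Prod.swap_prod_mk, Prod.fst_swap, Prod.snd_swap,
    discBump_swap] using hρ v.swap

theorem integral_mul (hρ : IsEllipseBump q a₁ a₂ m₁ m₂ K ρ) (ha₁ : a₁ ≠ 0) (ha₂ : a₂ ≠ 0)
    (w : ℝ × ℝ → ℝ) :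
    ∫ u, w u * ρ u = |a₁ * a₂| * K * ∫ v, w (a₁ * v.1 + m₁, a₂ * v.2 + m₂) * discBump q v := by
  have h := integral_comp_affine_prodMk (fun u => w u * ρ u) ha₁ ha₂ m₁ m₂
  unfold IsEllipseBump at hρ
  simp only [hρ, mul_left_comm _ K, integral_const_mul, smul_eq_mul, abs_inv] at h
  rw [mul_assoc, h, ← mul_assoc, mul_inv_cancel₀ (by positivity), one_mul]

theorem integral (hq : 0 < q) (hρ : IsEllipseBump q a₁ a₂ m₁ m₂ K ρ) (ha₁ : a₁ ≠ 0)
    (ha₂ : a₂ ≠ 0) : ∫ u, ρ u = |a₁ * a₂| * K * (π / (q + 1)) := by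
  simpa only [one_mul, integral_discBump hq] using hρ.integral_mul ha₁ ha₂ fun _ => 1

theorem integral_fst_mul (hq : 0 < q) (hρ : IsEllipseBump q a₁ a₂ m₁ m₂ K ρ) (ha₁ : a₁ ≠ 0)
    (ha₂ : a₂ ≠ 0) : ∫ u, u.1 * ρ u = (∫ u, ρ u) * m₁ := by
  rw [hρ.integral_mul ha₁ ha₂, integral_affine_mul (integrable_discBump hq)
    (continuous_fst.integrable_mul_discBump hq), integral_fst_mul_discBump,
    hρ.integral hq ha₁ ha₂, integral_discBump hq]
  ring

theorem integral_fst_sq_mul (hq : 0 < q) (hρ : IsEllipseBump q a₁ a₂ m₁ m₂ K ρ) (ha₁ : a₁ ≠ 0)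
    (ha₂ : a₂ ≠ 0) : ∫ u, u.1 ^ 2 * ρ u = (∫ u, ρ u) * (a₁ ^ 2 / (2 * (q + 2)) + m₁ ^ 2) := by
  rw [hρ.integral_mul ha₁ ha₂, integral_affine_sq_mul (integrable_discBump hq)
    (continuous_fst.integrable_mul_discBump hq) ((continuous_fst.pow 2).integrable_mul_discBump hq),
    integral_fst_mul_discBump, integral_fst_sq_mul_discBump hq, hρ.integral hq ha₁ ha₂,
    integral_discBump hq]
  field_simp
  ring

theorem integral_snd_mul (hq : 0 < q) (hρ : IsEllipseBump q a₁ a₂ m₁ m₂ K ρ) (ha₁ : a₁ ≠ 0)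
    (ha₂ : a₂ ≠ 0) : ∫ u, u.2 * ρ u = (∫ u, ρ u) * m₂ := by
  have h := hρ.swap.integral_fst_mul hq ha₂ ha₁
  simp only [Function.comp_apply, integral_comp_swap ρ] at h
  rw [← h]
  exact (integral_comp_swap _).symm

theorem integral_snd_sq_mul (hq : 0 < q) (hρ : IsEllipseBump q a₁ a₂ m₁ m₂ K ρ) (ha₁ : a₁ ≠ 0)
    (ha₂ : a₂ ≠ 0) : ∫ u, u.2 ^ 2 * ρ u = (∫ u, ρ u) * (a₂ ^ 2 / (2 * (q + 2)) + m₂ ^ 2) := by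
  have h := hρ.swap.integral_fst_sq_mul hq ha₂ ha₁
  simp only [Function.comp_apply, integral_comp_swap ρ] at h
  rw [← h]
  exact (integral_comp_swap _).symm

end IsEllipseBump

theorem isEllipseBump_of_eq {q ψ κ b C m₁ m₂ : ℝ} {ρ : ℝ × ℝ → ℝ} (hψ : 0 ≤ ψ) (hκ : 0 < κ)
    (hb : b < 0)
    (hρ : ∀ u : ℝ × ℝ, ρ u = C * max (ψ - κ * (u.1 - m₁) ^ 2 + b * (u.2 - m₂) ^ 2) 0 ^ q) :
    IsEllipseBump q √(ψ / κ) √(-ψ / b) m₁ m₂ (C * ψ ^ q) ρ := fun v => by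
  have h₁ : √(ψ / κ) ^ 2 = ψ / κ := sq_sqrt (div_nonneg hψ hκ.le)
  have h₂ : √(-ψ / b) ^ 2 = -ψ / b := sq_sqrt (div_nonneg_of_nonpos (by linarith) hb.le)
  have hquad : ψ - κ * (√(ψ / κ) * v.1 + m₁ - m₁) ^ 2 + b * (√(-ψ / b) * v.2 + m₂ - m₂) ^ 2
      = ψ * (1 - v.1 ^ 2 - v.2 ^ 2) := by
    simp only [add_sub_cancel_right, mul_pow, h₁, h₂]
    field_simp [hb.ne]
    ring
  rw [hρ, hquad, ← mul_zero ψ, ← mul_max_of_nonneg _ _ hψ, mul_rpow hψ (le_max_right _ _),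
    discBump, mul_assoc]

theorem IsEllipseBump.integral_eq_one {p γ κ b ψ m₁ m₂ : ℝ} {ρ : ℝ × ℝ → ℝ} (hp : 1 < p)
    (hγ : 0 < γ) (hκ : 0 < κ) (hb : b < 0)
    (hψ : ψ = ((1 / π) * √(-κ * b)) ^ ((p - 1) / p) * (p / (p - 1)) * γ ^ (1 / p))
    (hρ : IsEllipseBump (1 / (p - 1)) √(ψ / κ) √(-ψ / b) m₁ m₂
      (((p - 1) / (γ * p)) ^ (1 / (p - 1)) * ψ ^ (1 / (p - 1))) ρ) :
    ∫ u, ρ u = 1 := by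
  have hD : 0 < -κ * b := by nlinarith
  have hψ0 : 0 < ψ := hψ ▸ qGaussian_const_pos hp hγ (by positivity)
  have hsD : √(-κ * b) ≠ 0 := (sqrt_pos.2 hD).ne'
  have ha₂ : 0 < √(-ψ / b) := sqrt_pos.2 (div_pos_of_neg_of_neg (by linarith) hb)
  rw [hρ.integral (one_div_pos.2 (by linarith)) (by positivity) ha₂.ne',
    abs_of_nonneg (by positivity), ← sqrt_mul (by positivity),
    show ψ / κ * (-ψ / b) = ψ ^ 2 / (-κ * b) by field_simp, sqrt_div' _ hD.le, sqrt_sq hψ0.le]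
  calc ψ / √(-κ * b) * (((p - 1) / (γ * p)) ^ (1 / (p - 1)) * ψ ^ (1 / (p - 1)))
        * (π / (1 / (p - 1) + 1))
      = ((p - 1) / (γ * p)) ^ (1 / (p - 1)) * ψ ^ (1 / (p - 1)) * ψ
        * π / √(-κ * b) / (1 / (p - 1) + 1) := by ring
    _ = 1 := by
      rw [qGaussian_normalization hp hγ (by positivity) hψ]
      generalize √(-κ * b) = s at hsD ⊢
      have hp0 : p ≠ 0 := by linarith
      have hp1 : p - 1 ≠ 0 := by linarith
      field_simp
      rw [add_sub_cancel, div_self hp0]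

theorem qGaussian_ellipse_moments (p γ κ lam α m₁ m₂ : ℝ)
    (hp : 1 < p) (hγ : 0 < γ) (hκ : 0 < κ) (hlam : 0 < lam) (hα : α < 0)
    (ψ : ℝ)
    (hψ : ψ = ((1 / Real.pi) * Real.sqrt (-lam * κ * α / 2)) ^ ((p - 1) / p)
      * (p / (p - 1)) * γ ^ (1 / p))
    (ρ : ℝ × ℝ → ℝ)
    (hρ : ∀ u : ℝ × ℝ, ρ u = ((p - 1) / (γ * p)) ^ (1 / (p - 1)) *
      (max (ψ - κ * (u.1 - m₁) ^ 2 + α * lam / 2 * (u.2 - m₂) ^ 2) 0) ^ (1 / (p - 1))) :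
    (∫ u : ℝ × ℝ, u.1 * ρ u) = m₁ ∧
    (∫ u : ℝ × ℝ, u.2 * ρ u) = m₂ ∧
    (∫ u : ℝ × ℝ, u.1 ^ 2 * ρ u) = ψ * (p - 1) / (2 * κ * (2 * p - 1)) + m₁ ^ 2 ∧
    (∫ u : ℝ × ℝ, u.2 ^ 2 * ρ u) = -(ψ * (p - 1)) / (α * lam * (2 * p - 1)) + m₂ ^ 2 := by
  have hq : 0 < 1 / (p - 1) := one_div_pos.2 (by linarith)
  have hb : α * lam / 2 < 0 := by nlinarith
  have hψ' : ψ = ((1 / π) * √(-κ * (α * lam / 2))) ^ ((p - 1) / p) * (p / (p - 1))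
      * γ ^ (1 / p) := by
    rw [hψ]; ring_nf
  have hψ0 : 0 < ψ :=
    hψ' ▸ qGaussian_const_pos hp hγ (mul_pos (one_div_pos.2 pi_pos) (sqrt_pos.2 (by nlinarith)))
  have hbump := isEllipseBump_of_eq hψ0.le hκ hb hρ
  have hmass := hbump.integral_eq_one hp hγ hκ hb hψ'
  have ha₁ : √(ψ / κ) ≠ 0 := (sqrt_pos.2 (div_pos hψ0 hκ)).ne'
  have ha₂ : √(-ψ / (α * lam / 2)) ≠ 0 :=
    (sqrt_pos.2 (div_pos_of_neg_of_neg (by linarith) hb)).ne'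
  have hp1 : p - 1 ≠ 0 := by linarith
  have hq2 : 1 / (p - 1) + 2 = (2 * p - 1) / (p - 1) := by field_simp; ring
  refine ⟨?_, ?_, ?_, ?_⟩
  · rw [hbump.integral_fst_mul hq ha₁ ha₂, hmass, one_mul]
  · rw [hbump.integral_snd_mul hq ha₁ ha₂, hmass, one_mul]
  · rw [hbump.integral_fst_sq_mul hq ha₁ ha₂, hmass, one_mul, hq2, sq_sqrt (div_pos hψ0 hκ).le]
    field_simp
  · rw [hbump.integral_snd_sq_mul hq ha₁ ha₂, hmass, one_mul, hq2,
      sq_sqrt (div_pos_of_neg_of_neg (by linarith) hb).le]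
    field_simp [hα.ne, hlam.ne']
end

section
/- Let p > 1, γ > 0, κ > 0, λ > 0, α < 0, m₁, m₂ ∈ ℝ, and ψ̃ = ((1/π)√(-λκα/2))^{(p-1)/p}(p/(p-1))γ^{1/p}. For the q-Gaussian density π(u₁,u₂) = ((p-1)/(γp))^{1/(p-1)}(ψ̃ - κ(u₁-m₁)² + (αλ/2)(u₂-m₂)²)_+^{1/(p-1)}, the Tsallis entropy satisfies ∫_{ℝ²} (1/(p-1))(π(u) - π(u)^p) du = 1/(p-1) - ψ̃/((2p-1)γ). -/
open Real MeasureTheory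

/-!
Writing `ρ = C f ^ (1/(p-1))` with `f` the positive part of a concave quadratic vanishing on an
ellipse, both `∫ ρ` and `∫ ρ ^ p` are integrals of powers `f ^ s`. Fubini and the scaling of
`∫ (t - b y²)₊ ^ s dy` give `∫ f ^ s = J(s) J(s + 1/2) c ^ (s+1) / √(ab)`, where
`J(s) = ∫ (1 - y²)₊ ^ s dy`, and polar coordinates on the unit disc give
`J(s) J(s + 1/2) = π / (s + 1)`. The choice of `ψ̃` makes `∫ ρ = 1`, and then
`∫ ρ ^ p = (p - 1) ψ̃ / ((2p - 1) γ)`.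
-/

lemma continuous_max_rpow {X : Type*} [TopologicalSpace X] {g : X → ℝ} (hg : Continuous g)
    {s : ℝ} (hs : 0 < s) : Continuous fun x => max (g x) 0 ^ s :=
  (hg.max continuous_const).rpow_const fun _ => Or.inr hs.le

lemma setIntegral_Ioi_mul_max_one_sub_sq_rpow_s11 {s : ℝ} (hs : 0 < s) :
    ∫ r in Set.Ioi (0 : ℝ), r * max (1 - r ^ 2) 0 ^ s = 1 / (2 * (s + 1)) := by
  have hvanish : ∀ r ∈ Set.Ioi (0 : ℝ) \ Set.Ioc 0 1, r * max (1 - r ^ 2) 0 ^ s = 0 := by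
    rintro r ⟨hr0, hr1⟩
    have hr : 1 < r := by simp_all
    rw [max_eq_right (by nlinarith), zero_rpow hs.ne', mul_zero]
  rw [setIntegral_eq_of_subset_of_forall_sdiff_eq_zero measurableSet_Ioi Set.Ioc_subset_Ioi_self
    hvanish, ← intervalIntegral.integral_of_le zero_le_one]
  -- differentiable at `r = 1` because `s + 1 ≥ 1`
  have hderiv : ∀ r ∈ Set.uIcc (0 : ℝ) 1,
      HasDerivAt (fun r => -(1 - r ^ 2) ^ (s + 1) / (2 * (s + 1)))
        (r * max (1 - r ^ 2) 0 ^ s) r := by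
    intro r hr
    rw [Set.uIcc_of_le zero_le_one] at hr
    rw [max_eq_left (by nlinarith [hr.1, hr.2])]
    have h := ((hasDerivAt_pow 2 r).const_sub 1).rpow_const (p := s + 1) (Or.inr (by linarith))
    refine (h.neg.div_const (2 * (s + 1))).congr_deriv ?_
    rw [add_sub_cancel_right]
    push_cast
    field_simp
  have hcont : Continuous fun r : ℝ => r * max (1 - r ^ 2) 0 ^ s :=
    continuous_id.mul (continuous_max_rpow (by fun_prop) hs)
  rw [intervalIntegral.integral_eq_sub_of_hasDerivAt hderiv (hcont.intervalIntegrable 0 1)]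
  norm_num [zero_rpow (by linarith : s + 1 ≠ 0)]
  field_simp

lemma integral_max_one_sub_sq_sub_sq_rpow {s : ℝ} (hs : 0 < s) :
    ∫ u : ℝ × ℝ, max (1 - u.1 ^ 2 - u.2 ^ 2) 0 ^ s = π / (s + 1) := by
  rw [← integral_comp_polarCoord_symm]
  have hradial : ∀ q ∈ polarCoord.target,
      q.1 • max (1 - (polarCoord.symm q).1 ^ 2 - (polarCoord.symm q).2 ^ 2) 0 ^ s
        = q.1 * max (1 - q.1 ^ 2) 0 ^ s * 1 := by
    intro q _
    have hnorm : (polarCoord.symm q).1 ^ 2 + (polarCoord.symm q).2 ^ 2 = q.1 ^ 2 := by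
      simp only [polarCoord_symm_apply]
      linear_combination q.1 ^ 2 * cos_sq_add_sin_sq q.2
    rw [sub_sub, hnorm, smul_eq_mul, mul_one]
  have htarget : polarCoord.target = Set.Ioi (0 : ℝ) ×ˢ Set.Ioo (-π) π := rfl
  rw [setIntegral_congr_fun polarCoord.open_target.measurableSet hradial, htarget,
    Measure.volume_eq_prod, ← Measure.prod_restrict,
    integral_prod_mul (fun r : ℝ => r * max (1 - r ^ 2) 0 ^ s) (fun _ : ℝ => (1 : ℝ)),
    setIntegral_Ioi_mul_max_one_sub_sq_rpow_s11 hs, setIntegral_const,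
    Real.volume_real_Ioo_of_le (by linarith [pi_pos])]
  field_simp
  ring

/-- This is `B(1/2, s + 1)`, but only its product with the value at `s + 1/2` is ever needed, and
the unit disc computes that product without Beta functions. -/
noncomputable def truncatedParabolaIntegral (s : ℝ) : ℝ := ∫ y : ℝ, max (1 - y ^ 2) 0 ^ s

lemma integral_max_sub_mul_sq_rpow {s b : ℝ} (t : ℝ) (hs : 0 < s) (hb : 0 < b) :
    ∫ y : ℝ, max (t - b * y ^ 2) 0 ^ s
      = max t 0 ^ (s + 1 / 2) / √b * truncatedParabolaIntegral s := by
  rcases le_or_gt t 0 with ht | ht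
  · have hzero : ∀ y : ℝ, max (t - b * y ^ 2) 0 ^ s = 0 := fun y => by
      rw [max_eq_right (by nlinarith), zero_rpow hs.ne']
    simp only [hzero, integral_zero, max_eq_right ht, zero_rpow (by linarith : s + 1 / 2 ≠ 0),
      zero_div, zero_mul]
  · set c := √(b / t)
    have hc2 : c ^ 2 = b / t := sq_sqrt (div_pos hb ht).le
    have hscale : ∀ y : ℝ, max (t - b * y ^ 2) 0 ^ s = t ^ s * max (1 - (c * y) ^ 2) 0 ^ s := by
      intro y
      have : t - b * y ^ 2 = t * (1 - (c * y) ^ 2) := by rw [mul_pow, hc2]; field_simp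
      rw [this, ← mul_rpow ht.le (le_max_right _ _), mul_max_of_nonneg _ _ ht.le, mul_zero]
    have hcinv : c⁻¹ = √t / √b := by rw [← sqrt_inv, inv_div, sqrt_div ht.le]
    simp_rw [hscale]
    rw [integral_const_mul, Measure.integral_comp_mul_left (fun z => max (1 - z ^ 2) 0 ^ s),
      abs_of_pos (by positivity), smul_eq_mul, hcinv, max_eq_left ht.le, sqrt_eq_rpow,
      rpow_add ht, truncatedParabolaIntegral]
    ring

lemma lt_mul_sq_of_lt_abs {a c x : ℝ} (ha : 0 < a) (hx : 1 + |c| / a < |x|) : c < a * x ^ 2 := by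
  have h1 : |c| / a < x ^ 2 := by
    have : 0 ≤ |c| / a := by positivity
    nlinarith [sq_abs x]
  calc c ≤ |c| := le_abs_self c
    _ = a * (|c| / a) := by field_simp
    _ < a * x ^ 2 := by gcongr

lemma integrable_max_sub_mul_sq_sub_mul_sq_rpow {s a b : ℝ} (c : ℝ) (hs : 0 < s) (ha : 0 < a)
    (hb : 0 < b) : Integrable fun u : ℝ × ℝ => max (c - a * u.1 ^ 2 - b * u.2 ^ 2) 0 ^ s := by
  refine (continuous_max_rpow (by fun_prop) hs).integrable_of_hasCompactSupport
    (HasCompactSupport.intro (isCompact_closedBall 0 (1 + |c| / a + |c| / b)) fun u hu => ?_)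
  have hneg : c - a * u.1 ^ 2 - b * u.2 ^ 2 ≤ 0 := by
    rw [Metric.mem_closedBall, dist_zero_right, Prod.norm_def, Real.norm_eq_abs, Real.norm_eq_abs,
      not_le, lt_max_iff] at hu
    have : 0 ≤ |c| / a := by positivity
    have : 0 ≤ |c| / b := by positivity
    rcases hu with hu | hu
    · nlinarith [lt_mul_sq_of_lt_abs ha (x := u.1) (c := c) (by linarith)]
    · nlinarith [lt_mul_sq_of_lt_abs hb (x := u.2) (c := c) (by linarith)]
  rw [max_eq_right hneg, zero_rpow hs.ne']

lemma integral_max_sub_mul_sq_sub_mul_sq_rpow_eq_mul {s a b c : ℝ} (hs : 0 < s) (ha : 0 < a)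
    (hb : 0 < b) (hc : 0 < c) :
    ∫ u : ℝ × ℝ, max (c - a * u.1 ^ 2 - b * u.2 ^ 2) 0 ^ s
      = truncatedParabolaIntegral s * truncatedParabolaIntegral (s + 1 / 2) * c ^ (s + 1)
        / √(a * b) := by
  have hint := integrable_max_sub_mul_sq_sub_mul_sq_rpow c hs ha hb
  rw [Measure.volume_eq_prod] at hint ⊢
  rw [integral_prod _ hint]
  simp_rw [integral_max_sub_mul_sq_rpow _ hs hb]
  rw [integral_mul_const, integral_div, integral_max_sub_mul_sq_rpow c (by linarith) ha,
    max_eq_left hc.le, sqrt_mul ha.le, show s + 1 / 2 + 1 / 2 = s + 1 by ring]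
  ring

lemma truncatedParabolaIntegral_mul {s : ℝ} (hs : 0 < s) :
    truncatedParabolaIntegral s * truncatedParabolaIntegral (s + 1 / 2) = π / (s + 1) := by
  have h := integral_max_sub_mul_sq_sub_mul_sq_rpow_eq_mul hs one_pos one_pos one_pos
  simp only [one_mul, one_rpow, mul_one, sqrt_one, div_one] at h
  rw [← h, integral_max_one_sub_sq_sub_sq_rpow hs]

lemma integrable_ellipse_rpow {s a b : ℝ} (c m₁ m₂ : ℝ) (hs : 0 < s) (ha : 0 < a) (hb : 0 < b) :
    Integrable fun u : ℝ × ℝ => max (c - a * (u.1 - m₁) ^ 2 - b * (u.2 - m₂) ^ 2) 0 ^ s :=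
  (integrable_max_sub_mul_sq_sub_mul_sq_rpow c hs ha hb).comp_sub_right (m₁, m₂)

lemma integral_ellipse_rpow {s a b c : ℝ} (m₁ m₂ : ℝ) (hs : 0 < s) (ha : 0 < a) (hb : 0 < b)
    (hc : 0 < c) :
    ∫ u : ℝ × ℝ, max (c - a * (u.1 - m₁) ^ 2 - b * (u.2 - m₂) ^ 2) 0 ^ s
      = π * c ^ (s + 1) / ((s + 1) * √(a * b)) := by
  have htranslate := integral_sub_right_eq_self (μ := volume)
    (fun u : ℝ × ℝ => max (c - a * u.1 ^ 2 - b * u.2 ^ 2) 0 ^ s) (m₁, m₂)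
  simp only [Prod.fst_sub, Prod.snd_sub] at htranslate
  rw [htranslate, integral_max_sub_mul_sq_sub_mul_sq_rpow_eq_mul hs ha hb hc,
    truncatedParabolaIntegral_mul hs]
  field_simp

lemma integral_tsallis_ellipse {p C a b c : ℝ} (m₁ m₂ : ℝ) (hp : 1 < p) (hC : 0 ≤ C)
    (ha : 0 < a) (hb : 0 < b) (hc : 0 < c) :
    ∫ u : ℝ × ℝ, 1 / (p - 1) *
        (C * max (c - a * (u.1 - m₁) ^ 2 - b * (u.2 - m₂) ^ 2) 0 ^ (1 / (p - 1))
          - (C * max (c - a * (u.1 - m₁) ^ 2 - b * (u.2 - m₂) ^ 2) 0 ^ (1 / (p - 1))) ^ p)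
      = 1 / (p - 1) * (C * (π * c ^ (p / (p - 1)) / (p / (p - 1) * √(a * b)))
          - C ^ p * (π * c ^ (p / (p - 1) + 1) / ((p / (p - 1) + 1) * √(a * b)))) := by
  have hp1 : 0 < p - 1 := sub_pos.2 hp
  have hs : 0 < 1 / (p - 1) := by positivity
  have hw : 0 < p / (p - 1) := by positivity
  have hpow : ∀ x : ℝ, 0 ≤ x → (C * x ^ (1 / (p - 1))) ^ p = C ^ p * x ^ (p / (p - 1)) := by
    intro x hx
    rw [mul_rpow hC (by positivity), ← rpow_mul hx, one_div_mul_eq_div]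
  simp_rw [hpow _ (le_max_right _ _)]
  rw [integral_const_mul, integral_sub ((integrable_ellipse_rpow c m₁ m₂ hs ha hb).const_mul C)
    ((integrable_ellipse_rpow c m₁ m₂ hw ha hb).const_mul (C ^ p)), integral_const_mul,
    integral_const_mul, integral_ellipse_rpow m₁ m₂ hs ha hb hc,
    integral_ellipse_rpow m₁ m₂ hw ha hb hc, show 1 / (p - 1) + 1 = p / (p - 1) by field_simp; ring]

/-- `ψ̃` is chosen exactly so that the q-Gaussian has total mass one. -/
lemma qGaussian_coeff_mul_rpow {p γ K : ℝ} (hp : 1 < p) (hγ : 0 < γ) (hK : 0 < K) :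
    ((p - 1) / (γ * p)) ^ (1 / (p - 1))
        * (K ^ ((p - 1) / p) * (p / (p - 1)) * γ ^ (1 / p)) ^ (p / (p - 1))
      = K * (p / (p - 1)) := by
  have hp1 : 0 < p - 1 := sub_pos.2 hp
  have hp0 : 0 < p := by linarith
  set w := p / (p - 1) with hw
  have hw0 : 0 < w := by positivity
  have hcoeff : (p - 1) / (γ * p) = (w * γ)⁻¹ := by rw [hw]; field_simp
  have hww : w ^ w = w ^ (1 / (p - 1)) * w := by
    rw [← rpow_add_one hw0.ne', hw]; congr 1; field_simp; ring
  rw [hcoeff, inv_rpow (by positivity), mul_rpow hw0.le hγ.le,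
    mul_rpow (mul_nonneg (rpow_nonneg hK.le _) hw0.le) (rpow_nonneg hγ.le _),
    mul_rpow (rpow_nonneg hK.le _) hw0.le, ← rpow_mul hK.le, ← rpow_mul hγ.le,
    show (p - 1) / p * w = 1 by rw [hw]; field_simp, rpow_one,
    show 1 / p * w = 1 / (p - 1) by rw [hw]; field_simp, hww]
  field_simp

lemma qGaussian_tsallis_value {p γ W ψ : ℝ} (hp : 1 < p) (hγ : 0 < γ) (hW : 0 < W)
    (hψ : ψ = (1 / π * W) ^ ((p - 1) / p) * (p / (p - 1)) * γ ^ (1 / p)) :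
    1 / (p - 1) * (((p - 1) / (γ * p)) ^ (1 / (p - 1)) * (π * ψ ^ (p / (p - 1)) / (p / (p - 1) * W))
        - (((p - 1) / (γ * p)) ^ (1 / (p - 1))) ^ p
          * (π * ψ ^ (p / (p - 1) + 1) / ((p / (p - 1) + 1) * W)))
      = 1 / (p - 1) - ψ / ((2 * p - 1) * γ) := by
  have hp1 : 0 < p - 1 := sub_pos.2 hp
  have h2p : 0 < 2 * p - 1 := by linarith
  have hψ0 : 0 < ψ := by rw [hψ]; positivity
  set C := ((p - 1) / (γ * p)) ^ (1 / (p - 1))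
  set w := p / (p - 1) with hw
  have hC0 : 0 < C := by positivity
  have hw0 : 0 < w := by positivity
  have hCψ : C * ψ ^ w = 1 / π * W * w := by
    rw [hψ]; exact qGaussian_coeff_mul_rpow hp hγ (by positivity)
  have hCp : C ^ p = (p - 1) / (γ * p) * C := by
    have : C ^ (p - 1) = (p - 1) / (γ * p) := by
      rw [← rpow_mul (by positivity), one_div_mul_cancel hp1.ne', rpow_one]
    rw [← this, ← rpow_add_one hC0.ne', sub_add_cancel]
  have hw1 : w + 1 = (2 * p - 1) / (p - 1) := by rw [hw]; field_simp; ring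
  rw [hCp, rpow_add_one hψ0.ne']
  calc 1 / (p - 1) * (C * (π * ψ ^ w / (w * W))
          - (p - 1) / (γ * p) * C * (π * (ψ ^ w * ψ) / ((w + 1) * W)))
      = 1 / (p - 1) * (C * ψ ^ w) * π / (w * W) * (1 - (p - 1) * w * ψ / (γ * p * (w + 1))) := by
        field_simp
    _ = 1 / (p - 1) - ψ / ((2 * p - 1) * γ) := by
        rw [hCψ, hw1, hw]
        field_simp

theorem qGaussian_ellipse_entropy (p γ κ lam α m₁ m₂ : ℝ)
    (hp : 1 < p) (hγ : 0 < γ) (hκ : 0 < κ) (hlam : 0 < lam) (hα : α < 0)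
    (ψ : ℝ)
    (hψ : ψ = ((1 / Real.pi) * Real.sqrt (-lam * κ * α / 2)) ^ ((p - 1) / p)
      * (p / (p - 1)) * γ ^ (1 / p))
    (ρ : ℝ × ℝ → ℝ)
    (hρ : ∀ u : ℝ × ℝ, ρ u = ((p - 1) / (γ * p)) ^ (1 / (p - 1)) *
      (max (ψ - κ * (u.1 - m₁) ^ 2 + α * lam / 2 * (u.2 - m₂) ^ 2) 0) ^ (1 / (p - 1))) :
    (∫ u : ℝ × ℝ, 1 / (p - 1) * (ρ u - ρ u ^ p)) = 1 / (p - 1) - ψ / ((2 * p - 1) * γ) := by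
  have hb : 0 < -(α * lam / 2) := by nlinarith
  have hW : 0 < √(κ * -(α * lam / 2)) := by positivity
  rw [show -lam * κ * α / 2 = κ * -(α * lam / 2) by ring] at hψ
  have hψ0 : 0 < ψ := by rw [hψ]; positivity
  have hρ' : ∀ u : ℝ × ℝ, ρ u = ((p - 1) / (γ * p)) ^ (1 / (p - 1)) *
      max (ψ - κ * (u.1 - m₁) ^ 2 - -(α * lam / 2) * (u.2 - m₂) ^ 2) 0 ^ (1 / (p - 1)) := by
    intro u
    rw [hρ, neg_mul, sub_neg_eq_add]
  simp_rw [hρ']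
  rw [integral_tsallis_ellipse m₁ m₂ hp (by positivity) hκ hb hψ0,
    qGaussian_tsallis_value hp hγ hW hψ]
end

section
/- Let A, B > 0, γ > 0, x > 0, h > 0, Y₁, Y₂ ∈ ℝ, and ψ̃ = 2√(γ/π)(AB)^{1/4} x^h. For the p = 2 density π(u) = (1/(2γ))(2(AB)^{1/4}√(γ/π) x^h - A x^{2h}(u₁-Y₁)² - B x^{2h}(u₂-Y₂)²)_+, we have ∫ u₁ π du = Y₁, ∫ u₂ π du = Y₂, ∫(π - π²) du = 1 - ψ̃/(3γ), and the support of π is contained in [Y₁ - r₁, Y₁ + r₁] × [Y₂ - r₂, Y₂ + r₂] where r₁ = √(2 B^{1/4} √(γ/π)/(A^{3/4} x^h)) and r₂ = √(2 A^{1/4} √(γ/π)/(B^{3/4} x^h)). -/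
open Real MeasureTheory Set ENNReal

lemma prod_smul_smul (c d : ℝ≥0∞) (hc : c ≠ ⊤) (hd : d ≠ ⊤) :
    ((c • (volume : Measure ℝ)).prod (d • (volume : Measure ℝ)))
      = (c * d) • ((volume : Measure ℝ).prod (volume : Measure ℝ)) := by
  have h1 : c • (volume : Measure ℝ) = c.toNNReal • volume := by
    ext s hs; simp [ENNReal.smul_def, ENNReal.coe_toNNReal hc]
  have h2 : d • (volume : Measure ℝ) = d.toNNReal • volume := by
    ext s hs; simp [ENNReal.smul_def, ENNReal.coe_toNNReal hd]
  rw [h1, h2]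
  haveI i1 : SigmaFinite (c.toNNReal • (volume : Measure ℝ)) := SMul.sigmaFinite _
  haveI i2 : SigmaFinite (d.toNNReal • (volume : Measure ℝ)) := SMul.sigmaFinite _
  refine (Measure.prod_eq (μ := c.toNNReal • (volume : Measure ℝ))
    (ν := d.toNNReal • (volume : Measure ℝ)) ?_)
  intro s t hs ht
  simp [Measure.prod_prod, Measure.smul_apply, smul_eq_mul, ENNReal.smul_def,
    ENNReal.coe_toNNReal hc, ENNReal.coe_toNNReal hd]
  ring

lemma map_affine (a c : ℝ) (ha : a ≠ 0) :
    Measure.map (fun x : ℝ => c + a * x) volume = ENNReal.ofReal |a⁻¹| • volume := by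
  have h1 : (fun x : ℝ => c + a * x) = (fun x : ℝ => c + x) ∘ (fun x : ℝ => a * x) := rfl
  rw [h1, ← Measure.map_map (by fun_prop) (by fun_prop), Real.map_volume_mul_left ha,
    Measure.map_smul, map_add_left_eq_self]

lemma scale2d (f : ℝ × ℝ → ℝ) {α β : ℝ} (Y₁ Y₂ : ℝ) (hα : 0 < α) (hβ : 0 < β) :
    (∫ u : ℝ × ℝ, f u) = α * β * ∫ v : ℝ × ℝ, f (Y₁ + α * v.1, Y₂ + β * v.2) := by
  set e₁ : ℝ ≃ₜ ℝ := (Homeomorph.mulLeft₀ α hα.ne').trans (Homeomorph.addLeft Y₁) with he₁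
  set e₂ : ℝ ≃ₜ ℝ := (Homeomorph.mulLeft₀ β hβ.ne').trans (Homeomorph.addLeft Y₂) with he₂
  set T : (ℝ × ℝ) ≃ᵐ (ℝ × ℝ) := (e₁.prodCongr e₂).toMeasurableEquiv with hT
  have hTapp : ∀ v : ℝ × ℝ, T v = (Y₁ + α * v.1, Y₂ + β * v.2) := fun v => rfl
  have hmap : Measure.map T (volume : Measure (ℝ × ℝ))
      = (ENNReal.ofReal |α⁻¹| * ENNReal.ofReal |β⁻¹|) • (volume : Measure (ℝ × ℝ)) := by
    have hco : (T : ℝ × ℝ → ℝ × ℝ)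
        = Prod.map (fun x : ℝ => Y₁ + α * x) (fun y : ℝ => Y₂ + β * y) := rfl
    rw [hco, Measure.volume_eq_prod,
      ← Measure.map_prod_map volume volume (by fun_prop) (by fun_prop),
      map_affine α Y₁ hα.ne', map_affine β Y₂ hβ.ne',
      prod_smul_smul _ _ ENNReal.ofReal_ne_top ENNReal.ofReal_ne_top]
  have key : (∫ v : ℝ × ℝ, f (T v)) = (α⁻¹ * β⁻¹) * ∫ u : ℝ × ℝ, f u := by
    rw [← MeasureTheory.integral_map_equiv T f, hmap, integral_smul_measure]
    rw [ENNReal.toReal_mul, ENNReal.toReal_ofReal (abs_nonneg _),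
      ENNReal.toReal_ofReal (abs_nonneg _), abs_of_pos (inv_pos.2 hα), abs_of_pos (inv_pos.2 hβ)]
    simp [smul_eq_mul]
  have := key
  simp only [hTapp] at this
  rw [this]
  field_simp

lemma polar_target : polarCoord.target = Ioi (0:ℝ) ×ˢ Ioo (-π) π := rfl
lemma polar_symm (p : ℝ × ℝ) : polarCoord.symm p = (p.1 * cos p.2, p.1 * sin p.2) := rfl

lemma radial_int (n : ℕ) (hn : 0 < n) :
    (∫ r in Ioi (0:ℝ), r * max (1 - r^2) 0 ^ n) = 1 / (2*((n:ℝ)+1)) := by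
  have hsplit : Ioi (0:ℝ) = Ioc (0:ℝ) 1 ∪ Ioi (1:ℝ) := (Ioc_union_Ioi_eq_Ioi zero_le_one).symm
  have hcont : Continuous fun r : ℝ => r * max (1 - r^2) 0 ^ n := by fun_prop
  have hz : ∀ r ∈ Ioi (1:ℝ), r * max (1 - r^2) 0 ^ n = (fun _ : ℝ => (0:ℝ)) r := by
    intro r hr
    have : (1:ℝ) - r^2 < 0 := by simp only [mem_Ioi] at hr; nlinarith
    simp [max_eq_right this.le, zero_pow hn.ne']
  have h2 : (∫ r in Ioi (1:ℝ), r * max (1 - r^2) 0 ^ n) = 0 := by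
    rw [setIntegral_congr_fun measurableSet_Ioi hz]; simp
  have hint2 : IntegrableOn (fun r : ℝ => r * max (1 - r^2) 0 ^ n) (Ioi 1) := by
    rw [integrableOn_congr_fun hz measurableSet_Ioi]
    exact integrableOn_zero
  have h1 : (∫ r in Ioc (0:ℝ) 1, r * max (1 - r^2) 0 ^ n) = ∫ r in (0:ℝ)..1, r * (1-r^2)^n := by
    rw [intervalIntegral.integral_of_le zero_le_one]
    refine setIntegral_congr_fun measurableSet_Ioc (fun r hr => ?_)
    have : (0:ℝ) ≤ 1 - r^2 := by simp only [mem_Ioc] at hr; nlinarith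
    rw [max_eq_left this]
  have hne : ((n:ℝ)+1) ≠ 0 := by positivity
  have hftc : (∫ r in (0:ℝ)..1, r * (1-r^2)^n) = 1 / (2*((n:ℝ)+1)) := by
    have hd : ∀ r ∈ uIcc (0:ℝ) 1, HasDerivAt (fun s : ℝ => -(1-s^2)^(n+1) / (2*((n:ℝ)+1)))
        (r * (1-r^2)^n) r := by
      intro r _
      have h0 : HasDerivAt (fun s : ℝ => 1 - s^2) (-(2*r)) r := by
        simpa using ((hasDerivAt_id r).pow 2).const_sub 1
      have h1 : HasDerivAt (fun s : ℝ => (1-s^2)^(n+1))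
          ((n+1 : ℕ) * (1-r^2)^n * (-(2*r))) r := by
        simpa using h0.fun_pow (n+1)
      have : HasDerivAt (fun s : ℝ => -(1-s^2)^(n+1) / (2*((n:ℝ)+1)))
          (-(((n+1 : ℕ) : ℝ) * (1-r^2)^n * (-(2*r))) / (2*((n:ℝ)+1))) r :=
        (h1.fun_neg).div_const (2*((n:ℝ)+1))
      convert this using 1
      push_cast
      field_simp
    rw [intervalIntegral.integral_eq_sub_of_hasDerivAt hd
      ((show Continuous fun r : ℝ => r * (1-r^2)^n by fun_prop).intervalIntegrable 0 1)]
    norm_num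
    field_simp
    try ring
  rw [hsplit, setIntegral_union (by simp [Set.disjoint_left]) measurableSet_Ioi
    hcont.integrableOn_Ioc hint2, h2, h1, hftc, add_zero]

lemma polar_arg (p : ℝ × ℝ) :
    1 - (p.1 * cos p.2)^2 - (p.1 * sin p.2)^2 = 1 - p.1^2 := by
  linear_combination (-(p.1^2)) * (sin_sq_add_cos_sq p.2)

lemma angle_const : (∫ _θ in Ioo (-π) π, (1:ℝ)) = 2 * π := by
  rw [setIntegral_const]
  simp [Real.volume_Ioo]
  rw [max_eq_left (by positivity)]
  ring

lemma angle_cos : (∫ θ in Ioo (-π) π, cos θ) = 0 := by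
  rw [← integral_Ioc_eq_integral_Ioo, ← intervalIntegral.integral_of_le (by linarith [pi_pos])]
  simp [integral_cos]

lemma angle_sin : (∫ θ in Ioo (-π) π, sin θ) = 0 := by
  rw [← integral_Ioc_eq_integral_Ioo, ← intervalIntegral.integral_of_le (by linarith [pi_pos])]
  simp [integral_sin]

lemma model_int (n : ℕ) (hn : 0 < n) :
    (∫ u : ℝ × ℝ, max (1 - u.1^2 - u.2^2) 0 ^ n) = π / ((n:ℝ)+1) := by
  rw [← integral_comp_polarCoord_symm (fun u : ℝ × ℝ => max (1 - u.1^2 - u.2^2) 0 ^ n)]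
  rw [setIntegral_congr_fun polarCoord.open_target.measurableSet
    (g := fun p : ℝ × ℝ => (fun r => r * max (1-r^2) 0 ^ n) p.1 * (fun _ : ℝ => (1:ℝ)) p.2)
    (fun p _ => by simp [polar_symm, polar_arg p, smul_eq_mul])]
  rw [polar_target, Measure.volume_eq_prod,
    setIntegral_prod_mul (fun r => r * max (1-r^2) 0 ^ n) (fun _ : ℝ => (1:ℝ)) _ _,
    radial_int n hn, angle_const]
  field_simp

lemma model_mom1 : (∫ u : ℝ × ℝ, u.1 * max (1 - u.1^2 - u.2^2) 0) = 0 := by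
  rw [← integral_comp_polarCoord_symm (fun u : ℝ × ℝ => u.1 * max (1 - u.1^2 - u.2^2) 0)]
  rw [setIntegral_congr_fun polarCoord.open_target.measurableSet
    (g := fun p : ℝ × ℝ => (fun r => r^2 * max (1-r^2) 0) p.1 * (fun θ : ℝ => cos θ) p.2)
    (fun p _ => by simp only [polar_symm, polar_arg p, smul_eq_mul]; ring)]
  rw [polar_target, Measure.volume_eq_prod,
    setIntegral_prod_mul (fun r => r^2 * max (1-r^2) 0) (fun θ : ℝ => cos θ) _ _,
    angle_cos, mul_zero]

lemma model_mom2 : (∫ u : ℝ × ℝ, u.2 * max (1 - u.1^2 - u.2^2) 0) = 0 := by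
  rw [← integral_comp_polarCoord_symm (fun u : ℝ × ℝ => u.2 * max (1 - u.1^2 - u.2^2) 0)]
  rw [setIntegral_congr_fun polarCoord.open_target.measurableSet
    (g := fun p : ℝ × ℝ => (fun r => r^2 * max (1-r^2) 0) p.1 * (fun θ : ℝ => sin θ) p.2)
    (fun p _ => by simp only [polar_symm, polar_arg p, smul_eq_mul]; ring)]
  rw [polar_target, Measure.volume_eq_prod,
    setIntegral_prod_mul (fun r => r^2 * max (1-r^2) 0) (fun θ : ℝ => sin θ) _ _,
    angle_sin, mul_zero]

lemma model_support (v : ℝ × ℝ) (hv : v ∉ (Icc (-1:ℝ) 1 ×ˢ Icc (-1:ℝ) 1)) :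
    max (1 - v.1^2 - v.2^2) 0 = 0 := by
  apply max_eq_right
  by_contra hpos
  push_neg at hpos
  exact hv ⟨⟨by nlinarith [sq_nonneg v.2], by nlinarith [sq_nonneg v.2]⟩,
    ⟨by nlinarith [sq_nonneg v.1], by nlinarith [sq_nonneg v.1]⟩⟩

lemma intM1 : Integrable (fun v : ℝ × ℝ => max (1 - v.1^2 - v.2^2) 0) := by
  refine Continuous.integrable_of_hasCompactSupport (by fun_prop) ?_
  exact HasCompactSupport.intro (isCompact_Icc.prod isCompact_Icc)
    (fun v hv => model_support v hv)

lemma intM2 : Integrable (fun v : ℝ × ℝ => v.1 * max (1 - v.1^2 - v.2^2) 0) := by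
  refine Continuous.integrable_of_hasCompactSupport (by fun_prop) ?_
  exact HasCompactSupport.intro (isCompact_Icc.prod isCompact_Icc)
    (fun v hv => by rw [model_support v hv, mul_zero])

lemma intM3 : Integrable (fun v : ℝ × ℝ => v.2 * max (1 - v.1^2 - v.2^2) 0) := by
  refine Continuous.integrable_of_hasCompactSupport (by fun_prop) ?_
  exact HasCompactSupport.intro (isCompact_Icc.prod isCompact_Icc)
    (fun v hv => by rw [model_support v hv, mul_zero])

lemma mint1 : (∫ v : ℝ × ℝ, max (1 - v.1^2 - v.2^2) 0) = π / 2 := by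
  have := model_int 1 one_pos
  norm_num at this
  exact this

lemma mint2 : (∫ v : ℝ × ℝ, max (1 - v.1^2 - v.2^2) 0 ^ 2) = π / 3 := by
  have := model_int 2 two_pos
  norm_num at this
  exact this

theorem sparse_tsallis_moments_entropy_support (A B γ x h Y₁ Y₂ : ℝ)
    (hA : 0 < A) (hB : 0 < B) (hγ : 0 < γ) (hx : 0 < x) (hh : 0 < h)
    (ψ : ℝ) (hψ : ψ = 2 * Real.sqrt (γ / Real.pi) * (A * B) ^ ((1 : ℝ) / 4) * x ^ h)
    (ρ : ℝ × ℝ → ℝ)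
    (hρ : ∀ u : ℝ × ℝ, ρ u = 1 / (2 * γ) *
      max (2 * (A * B) ^ ((1 : ℝ) / 4) * Real.sqrt (γ / Real.pi) * x ^ h
        - A * x ^ (2 * h) * (u.1 - Y₁) ^ 2 - B * x ^ (2 * h) * (u.2 - Y₂) ^ 2) 0)
    (r₁ r₂ : ℝ)
    (hr₁ : r₁ = Real.sqrt (2 * B ^ ((1 : ℝ) / 4) * Real.sqrt (γ / Real.pi)
      / (A ^ ((3 : ℝ) / 4) * x ^ h)))
    (hr₂ : r₂ = Real.sqrt (2 * A ^ ((1 : ℝ) / 4) * Real.sqrt (γ / Real.pi)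
      / (B ^ ((3 : ℝ) / 4) * x ^ h))) :
    (∫ u : ℝ × ℝ, u.1 * ρ u) = Y₁ ∧
    (∫ u : ℝ × ℝ, u.2 * ρ u) = Y₂ ∧
    (∫ u : ℝ × ℝ, ρ u - ρ u ^ 2) = 1 - ψ / (3 * γ) ∧
    Function.support ρ ⊆ Icc (Y₁ - r₁) (Y₁ + r₁) ×ˢ Icc (Y₂ - r₂) (Y₂ + r₂) := by
  have hπ := Real.pi_pos
  set C : ℝ := 2 * (A * B) ^ ((1 : ℝ) / 4) * Real.sqrt (γ / Real.pi) * x ^ h with hC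
  set a : ℝ := A * x ^ (2 * h) with ha
  set b : ℝ := B * x ^ (2 * h) with hb
  have hCpos : 0 < C := by rw [hC]; positivity
  have hapos : 0 < a := by rw [ha]; positivity
  have hbpos : 0 < b := by rw [hb]; positivity
  set α : ℝ := Real.sqrt (C / a) with hα
  set β : ℝ := Real.sqrt (C / b) with hβ
  have hαpos : 0 < α := Real.sqrt_pos.2 (by positivity)
  have hβpos : 0 < β := Real.sqrt_pos.2 (by positivity)
  have hα2 : α ^ 2 = C / a := Real.sq_sqrt (by positivity)
  have hβ2 : β ^ 2 = C / b := Real.sq_sqrt (by positivity)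
  have haα : a * α ^ 2 = C := by rw [hα2]; field_simp
  have hbβ : b * β ^ 2 = C := by rw [hβ2]; field_simp
  have hX : x ^ (2 * h) = (x ^ h) ^ 2 := by
    rw [two_mul, Real.rpow_add hx]; ring
  have hg2 : Real.sqrt (γ / Real.pi) ^ 2 = γ / Real.pi := Real.sq_sqrt (by positivity)
  have ht2 : Real.sqrt (A * B) ^ 2 = A * B := Real.sq_sqrt (by positivity)
  have hs2 : ((A * B) ^ ((1 : ℝ) / 4)) ^ 2 = Real.sqrt (A * B) := by
    rw [← Real.rpow_natCast ((A * B) ^ ((1 : ℝ) / 4)) 2, ← Real.rpow_mul (by positivity)]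
    rw [Real.sqrt_eq_rpow]
    norm_num
  -- key numeric identity
  have key : α * β * C = 4 * γ / Real.pi := by
    have hC2 : C ^ 2 = 4 * Real.sqrt (A * B) * (γ / Real.pi) * (x ^ h) ^ 2 := by
      have e : C ^ 2 = 2 ^ 2 * ((A * B) ^ ((1 : ℝ) / 4)) ^ 2
          * Real.sqrt (γ / Real.pi) ^ 2 * (x ^ h) ^ 2 := by rw [hC]; ring
      rw [e, hs2, hg2]; ring
    have hab : a * b = (A * B) * ((x ^ h) ^ 2) ^ 2 := by rw [ha, hb, hX]; ring
    have h1 : (α * β * C) ^ 2 = (4 * γ / Real.pi) ^ 2 := by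
      have e1 : (α * β * C) ^ 2 = (C / a) * (C / b) * C ^ 2 := by
        rw [← hα2, ← hβ2]; ring
      rw [e1]
      have e2 : (C / a) * (C / b) * C ^ 2 = (C ^ 2) ^ 2 / (a * b) := by
        field_simp
      rw [e2, hC2, hab]
      have e3 : (4 * Real.sqrt (A * B) * (γ / Real.pi) * (x ^ h) ^ 2) ^ 2
          = 16 * (A * B) * (γ / Real.pi) ^ 2 * ((x ^ h) ^ 2) ^ 2 := by
        linear_combination (16 * (γ / Real.pi) ^ 2 * ((x ^ h) ^ 2) ^ 2) * ht2
      rw [e3]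
      have hABpos : (0:ℝ) < A * B := by positivity
      have hXpos : (0:ℝ) < (x ^ h) ^ 2 := by positivity
      field_simp
      ring
    have h2 : 0 ≤ α * β * C := by positivity
    have h3 : 0 ≤ 4 * γ / Real.pi := by positivity
    rw [← Real.sqrt_sq h2, h1, Real.sqrt_sq h3]
  -- identification α = r₁, β = r₂
  have hA1 : A ^ ((1:ℝ)/4) * A ^ ((3:ℝ)/4) = A := by
    rw [← Real.rpow_add hA]; norm_num
  have hB1 : B ^ ((1:ℝ)/4) * B ^ ((3:ℝ)/4) = B := by
    rw [← Real.rpow_add hB]; norm_num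
  have hmulr : (A * B) ^ ((1:ℝ)/4) = A ^ ((1:ℝ)/4) * B ^ ((1:ℝ)/4) :=
    Real.mul_rpow hA.le hB.le
  have hCa : C / a = 2 * B ^ ((1 : ℝ) / 4) * Real.sqrt (γ / Real.pi)
      / (A ^ ((3 : ℝ) / 4) * x ^ h) := by
    rw [hC, ha, hX, hmulr]
    rw [div_eq_div_iff (by positivity) (by positivity)]
    linear_combination (2 * B ^ ((1:ℝ)/4) * Real.sqrt (γ / Real.pi) * (x ^ h) ^ 2) * hA1
  have hCb : C / b = 2 * A ^ ((1 : ℝ) / 4) * Real.sqrt (γ / Real.pi)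
      / (B ^ ((3 : ℝ) / 4) * x ^ h) := by
    rw [hC, hb, hX, hmulr]
    rw [div_eq_div_iff (by positivity) (by positivity)]
    linear_combination (2 * A ^ ((1:ℝ)/4) * Real.sqrt (γ / Real.pi) * (x ^ h) ^ 2) * hB1
  have hαr : α = r₁ := by rw [hα, hCa, hr₁]
  have hβr : β = r₂ := by rw [hβ, hCb, hr₂]
  -- support
  have hsupp : Function.support ρ ⊆ Icc (Y₁ - r₁) (Y₁ + r₁) ×ˢ Icc (Y₂ - r₂) (Y₂ + r₂) := by
    intro u hu
    have h0 : ρ u ≠ 0 := hu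
    rw [hρ] at h0
    have hpos : 0 < C - a * (u.1 - Y₁) ^ 2 - b * (u.2 - Y₂) ^ 2 := by
      by_contra hle
      push_neg at hle
      exact h0 (by rw [max_eq_right hle, mul_zero])
    have hr₁pos : 0 < r₁ := hαr ▸ hαpos
    have hr₂pos : 0 < r₂ := hβr ▸ hβpos
    have hb2 : 0 ≤ b * (u.2 - Y₂) ^ 2 := mul_nonneg hbpos.le (sq_nonneg _)
    have ha2' : 0 ≤ a * (u.1 - Y₁) ^ 2 := mul_nonneg hapos.le (sq_nonneg _)
    have h1 : (u.1 - Y₁) ^ 2 ≤ r₁ ^ 2 := by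
      rw [← hαr, hα2, le_div_iff₀ hapos, mul_comm]
      linarith
    have h2 : (u.2 - Y₂) ^ 2 ≤ r₂ ^ 2 := by
      rw [← hβr, hβ2, le_div_iff₀ hbpos, mul_comm]
      linarith
    have ha1 : |u.1 - Y₁| ≤ r₁ := by
      have := Real.sqrt_le_sqrt h1
      rwa [Real.sqrt_sq_eq_abs, Real.sqrt_sq hr₁pos.le] at this
    have ha2 : |u.2 - Y₂| ≤ r₂ := by
      have := Real.sqrt_le_sqrt h2
      rwa [Real.sqrt_sq_eq_abs, Real.sqrt_sq hr₂pos.le] at this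
    rw [abs_le] at ha1 ha2
    exact ⟨⟨by linarith [ha1.1], by linarith [ha1.2]⟩,
      ⟨by linarith [ha2.1], by linarith [ha2.2]⟩⟩
  -- continuity and integrability of ρ
  have hρfun : ρ = fun u : ℝ × ℝ => 1 / (2 * γ) *
      max (C - a * (u.1 - Y₁) ^ 2 - b * (u.2 - Y₂) ^ 2) 0 := funext hρ
  have hρcont : Continuous ρ := by rw [hρfun]; fun_prop
  have hcs : HasCompactSupport ρ :=
    HasCompactSupport.intro (isCompact_Icc.prod isCompact_Icc)
      (fun u hu => by by_contra hne; exact hu (hsupp hne))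
  have hintρ : Integrable ρ := hρcont.integrable_of_hasCompactSupport hcs
  have hintρ2 : Integrable (fun u => ρ u ^ 2) :=
    (hρcont.pow 2).integrable_of_hasCompactSupport
      (HasCompactSupport.intro (isCompact_Icc.prod isCompact_Icc)
        (fun u hu => by
          have : ρ u = 0 := by by_contra hne; exact hu (hsupp hne)
          simp [this]))
  -- max pulls out positive constants
  have hmaxC : ∀ t : ℝ, max (C * t) 0 = C * max t 0 := by
    intro t
    rcases le_total t 0 with ht | ht
    · rw [max_eq_right ht, mul_zero, max_eq_right (mul_nonpos_of_nonneg_of_nonpos hCpos.le ht)]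
    · rw [max_eq_left ht, max_eq_left (mul_nonneg hCpos.le ht)]
  -- pointwise rescaled density
  have hpt : ∀ v : ℝ × ℝ, ρ (Y₁ + α * v.1, Y₂ + β * v.2)
      = (C / (2 * γ)) * max (1 - v.1 ^ 2 - v.2 ^ 2) 0 := by
    intro v
    rw [hρ]
    have harg : C - a * (Y₁ + α * v.1 - Y₁) ^ 2 - b * (Y₂ + β * v.2 - Y₂) ^ 2
        = C * (1 - v.1 ^ 2 - v.2 ^ 2) := by
      linear_combination (-(v.1 ^ 2)) * haα + (-(v.2 ^ 2)) * hbβ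
    simp only
    rw [harg, hmaxC (1 - v.1 ^ 2 - v.2 ^ 2)]
    ring
  -- integrals
  have I1 : (∫ u : ℝ × ℝ, ρ u) = 1 := by
    rw [scale2d ρ Y₁ Y₂ hαpos hβpos]
    simp only [hpt]
    rw [integral_const_mul, mint1]
    have e : α * β * (C / (2 * γ) * (π / 2)) = (α * β * C) * π / (4 * γ) := by ring
    rw [e, key]
    field_simp
  have I2 : (∫ u : ℝ × ℝ, ρ u ^ 2) = C / (3 * γ) := by
    rw [scale2d (fun u => ρ u ^ 2) Y₁ Y₂ hαpos hβpos]
    simp only [hpt]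
    have e0 : ∀ v : ℝ × ℝ, (C / (2 * γ) * max (1 - v.1 ^ 2 - v.2 ^ 2) 0) ^ 2
        = (C / (2 * γ)) ^ 2 * max (1 - v.1 ^ 2 - v.2 ^ 2) 0 ^ 2 := fun v => by ring
    simp only [e0]
    rw [integral_const_mul, mint2]
    have e : α * β * ((C / (2 * γ)) ^ 2 * (π / 3)) = ((α * β * C) * π) * (C / (12 * γ ^ 2)) := by
      ring
    rw [e, key]
    field_simp
    ring
  have I3 : (∫ u : ℝ × ℝ, u.1 * ρ u) = Y₁ := by
    rw [scale2d (fun u => u.1 * ρ u) Y₁ Y₂ hαpos hβpos]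
    simp only [hpt]
    have hexp : ∀ v : ℝ × ℝ, (Y₁ + α * v.1) * ((C / (2 * γ)) * max (1 - v.1 ^ 2 - v.2 ^ 2) 0)
        = (C / (2 * γ) * Y₁) * max (1 - v.1 ^ 2 - v.2 ^ 2) 0
          + (C / (2 * γ) * α) * (v.1 * max (1 - v.1 ^ 2 - v.2 ^ 2) 0) := fun v => by ring
    simp only [hexp]
    rw [integral_add (intM1.const_mul _) (intM2.const_mul _), integral_const_mul,
      integral_const_mul, mint1, model_mom1, mul_zero, add_zero]
    have e : α * β * (C / (2 * γ) * Y₁ * (π / 2)) = Y₁ * ((α * β * C) * π / (4 * γ)) := by ring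
    rw [e, key]
    field_simp
  have I4 : (∫ u : ℝ × ℝ, u.2 * ρ u) = Y₂ := by
    rw [scale2d (fun u => u.2 * ρ u) Y₁ Y₂ hαpos hβpos]
    simp only [hpt]
    have hexp : ∀ v : ℝ × ℝ, (Y₂ + β * v.2) * ((C / (2 * γ)) * max (1 - v.1 ^ 2 - v.2 ^ 2) 0)
        = (C / (2 * γ) * Y₂) * max (1 - v.1 ^ 2 - v.2 ^ 2) 0
          + (C / (2 * γ) * β) * (v.2 * max (1 - v.1 ^ 2 - v.2 ^ 2) 0) := fun v => by ring
    simp only [hexp]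
    rw [integral_add (intM1.const_mul _) (intM3.const_mul _), integral_const_mul,
      integral_const_mul, mint1, model_mom2, mul_zero, add_zero]
    have e : α * β * (C / (2 * γ) * Y₂ * (π / 2)) = Y₂ * ((α * β * C) * π / (4 * γ)) := by ring
    rw [e, key]
    field_simp
  have hψC : ψ = C := by rw [hψ, hC]; ring
  refine ⟨I3, I4, ?_, hsupp⟩
  rw [integral_sub hintρ hintρ2, I1, I2, hψC]
end
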